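/- arXiv:2511.11530 — 12 statements merged into one kernel-verified Lean document; each statement's English description precedes it below -/
import Mathlib

section
/- Let α > 1 be real. For every positive integer x, the integral over s ∈ (0, ∞) of the geometric probability mass e^{-s(x-1)}·(1 − e^{-s}) weighted by the mixing density f(s; α) = s^{α-1} / ((e^s − 1)·ζ(α)·Γ(α)) equals the Zipf probability mass: ∫₀^∞ e^{-s(x-1)}·(1 − e^{-s}) · s^{α-1} / ((e^s − 1)·ζ(α)·Γ(α)) ds = x^{-α} / ζ(α). (Theorem 1, PMF form: the Zipf(α) distribution is a mixture of geometric distributions on {1,2,3,...} with parameter s = −log(1−p) and mixing density f(s; α).) -/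
open MeasureTheory Real Set

/-- **Theorem 1 (PMF form).** The Zipf(α) distribution is a mixture of geometric
distributions on {1,2,3,...} (parametrized by s = -log(1-p)) with mixing density
f(s; α) = s^(α-1) / ((e^s - 1) ζ(α) Γ(α)). -/
theorem zipf_is_mixture_of_geometric_pmf (α : ℝ) (hα : 1 < α) (x : ℕ) (hx : 0 < x) :
    ∫ s in Ioi (0 : ℝ),
        Real.exp (-(s * ((x : ℝ) - 1))) * (1 - Real.exp (-s)) *
          (s ^ (α - 1) /
            ((Real.exp s - 1) * (∑' n : ℕ+, (n : ℝ) ^ (-α)) * Real.Gamma α))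
      = (x : ℝ) ^ (-α) / (∑' n : ℕ+, (n : ℝ) ^ (-α)) := by
  have hsum : Summable (fun n : ℕ+ => ((n : ℕ) : ℝ) ^ (-α)) := by
    exact (Real.summable_nat_rpow.mpr (by linarith)).subtype _
  have hZ : 0 < ∑' n : ℕ+, (n : ℝ) ^ (-α) := by
    refine Summable.tsum_pos hsum (fun n => ?_) 1 ?_
    · exact Real.rpow_nonneg (by exact_mod_cast Nat.zero_le _) _
    · exact Real.rpow_pos_of_pos (by norm_num) _
  have hG : 0 < Real.Gamma α := Real.Gamma_pos_of_pos (by linarith)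
  have hxpos : (0 : ℝ) < (x : ℝ) := by exact_mod_cast hx
  set Z : ℝ := ∑' n : ℕ+, (n : ℝ) ^ (-α) with hZdef
  have hcongr : ∀ s ∈ Ioi (0 : ℝ),
      Real.exp (-(s * ((x : ℝ) - 1))) * (1 - Real.exp (-s)) *
          (s ^ (α - 1) / ((Real.exp s - 1) * Z * Real.Gamma α))
        = (Z * Real.Gamma α)⁻¹ * (s ^ (α - 1) * Real.exp (-((x : ℝ) * s))) := by
    intro s hs
    have hs' : (0 : ℝ) < s := hs
    have hes : Real.exp s - 1 > 0 := by
      have := Real.exp_lt_exp.mpr hs'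
      simp only [Real.exp_zero] at this
      linarith
    have h1 : 1 - Real.exp (-s) = Real.exp (-s) * (Real.exp s - 1) := by
      rw [mul_sub, ← Real.exp_add]
      simp
    have h2 : Real.exp (-(s * ((x : ℝ) - 1))) * Real.exp (-s)
        = Real.exp (-((x : ℝ) * s)) := by
      rw [← Real.exp_add]; ring_nf
    rw [h1, show Real.exp (-(s * ((x:ℝ) - 1))) * (Real.exp (-s) * (Real.exp s - 1))
        = Real.exp (-((x:ℝ) * s)) * (Real.exp s - 1) from by rw [← mul_assoc, h2]]
    field_simp
  rw [setIntegral_congr_fun measurableSet_Ioi hcongr, integral_const_mul,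
    integral_rpow_mul_exp_neg_mul_Ioi (by linarith : (0:ℝ) < α) hxpos]
  rw [one_div, Real.inv_rpow hxpos.le, ← Real.rpow_neg hxpos.le]
  field_simp
end

section
/- Let α > 1 be real and let z be real with |z| < 1. Then the probability generating function of the geometric distribution on {1,2,...} (in the parametrization s = −log(1−p)), integrated against the mixing density f(s; α) = s^{α-1} / ((e^s − 1)·ζ(α)·Γ(α)), equals the probability generating function of the Zipf(α) distribution: ∫₀^∞ ((e^s − 1)·z / (e^s − z)) · s^{α-1} / ((e^s − 1)·ζ(α)·Γ(α)) ds = (1/ζ(α)) · ∑_{x=1}^∞ z^x · x^{-α}. (Theorem 1, PGF form.) -/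
open MeasureTheory Real Set

lemma tsum_pnat_pow {w : ℝ} (hw : |w| < 1) :
    ∑' x : ℕ+, w ^ (x : ℕ) = w / (1 - w) := by
  rw [← Equiv.pnatEquivNat.symm.tsum_eq (fun x : ℕ+ => w ^ (x : ℕ))]
  have h1 : ∀ n : ℕ, w ^ ((Equiv.pnatEquivNat.symm n : ℕ+) : ℕ) = w * w ^ n := by
    intro n
    simp [Equiv.pnatEquivNat, Nat.succPNat, pow_succ, mul_comm]
  rw [tsum_congr h1, tsum_mul_left, tsum_geometric_of_norm_lt_one (by rwa [Real.norm_eq_abs]),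
    div_eq_mul_inv]

/-- **Theorem 1 (PGF form).** The PGF of the geometric distribution on {1,2,...}
(parametrized by s = -log(1-p)), mixed with the density
f(s; α) = s^(α-1) / ((e^s - 1) ζ(α) Γ(α)), equals the PGF of the Zipf(α) distribution. -/
theorem zipf_is_mixture_of_geometric_pgf (α : ℝ) (hα : 1 < α) (z : ℝ) (hz : |z| < 1) :
    ∫ s in Ioi (0 : ℝ),
        ((Real.exp s - 1) * z / (Real.exp s - z)) *
          (s ^ (α - 1) /
            ((Real.exp s - 1) * (∑' n : ℕ+, (n : ℝ) ^ (-α)) * Real.Gamma α))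
      = (1 / (∑' n : ℕ+, (n : ℝ) ^ (-α))) * ∑' x : ℕ+, z ^ (x : ℕ) * (x : ℝ) ^ (-α) := by
  have hzlt : z < 1 := lt_of_le_of_lt (le_abs_self z) hz
  set Z : ℝ := ∑' n : ℕ+, (n : ℝ) ^ (-α) with hZdef
  have hsumZ : Summable (fun n : ℕ+ => (n : ℝ) ^ (-α)) := by
    have h : Summable (fun n : ℕ => (n : ℝ) ^ (-α)) := by
      rw [Real.summable_nat_rpow]; linarith
    exact h.comp_injective (fun a b hab => by exact_mod_cast PNat.coe_injective (by exact_mod_cast hab))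
  have hZpos : 0 < Z := by
    refine Summable.tsum_pos hsumZ (fun i => Real.rpow_nonneg (by positivity) _) 1 ?_
    simp
  have hGpos : 0 < Real.Gamma α := Real.Gamma_pos_of_pos (by linarith)
  set C : ℝ := (Z * Real.Gamma α)⁻¹ with hCdef
  have hCpos : 0 < C := by positivity
  set F : ℕ+ → ℝ → ℝ :=
    fun x s => C * (z ^ (x : ℕ) * (s ^ (α - 1) * Real.exp (-((x : ℕ) * s)))) with hFdef
  -- integrability of basic kernel
  have hker : ∀ x : ℕ+,
      IntegrableOn (fun s : ℝ => s ^ (α - 1) * Real.exp (-((x : ℕ) * s))) (Ioi 0) := by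
    intro x
    have h := integrableOn_rpow_mul_exp_neg_mul_rpow (p := 1) (s := α - 1)
      (b := (x : ℝ)) (by linarith) one_pos (by positivity)
    refine h.congr_fun (fun s hs => ?_) measurableSet_Ioi
    simp only [Real.rpow_one, neg_mul]
  have hint : ∀ x : ℕ+, Integrable (F x) (volume.restrict (Ioi 0)) := by
    intro x
    exact ((hker x).const_mul _).const_mul _
  -- value of basic integral
  have hval : ∀ x : ℕ+,
      ∫ s in Ioi (0 : ℝ), s ^ (α - 1) * Real.exp (-((x : ℕ) * s))
        = (1 / (x : ℝ)) ^ α * Real.Gamma α := by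
    intro x
    exact Real.integral_rpow_mul_exp_neg_mul_Ioi (by linarith) (by positivity)
  -- norm integrals and their summability
  have hnorm : ∀ x : ℕ+,
      ∫ s in Ioi (0 : ℝ), ‖F x s‖
        = C * (|z| ^ (x : ℕ) * ((1 / (x : ℝ)) ^ α * Real.Gamma α)) := by
    intro x
    have heq : ∀ s ∈ Ioi (0 : ℝ),
        ‖F x s‖ = C * (|z| ^ (x : ℕ) * (s ^ (α - 1) * Real.exp (-((x : ℕ) * s)))) := by
      intro s hs
      rw [hFdef]
      simp only [Real.norm_eq_abs, abs_mul, abs_of_pos hCpos, abs_pow,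
        abs_of_nonneg (Real.rpow_nonneg (le_of_lt hs) _),
        abs_of_pos (Real.exp_pos _)]
    rw [setIntegral_congr_fun measurableSet_Ioi heq, integral_const_mul, integral_const_mul,
      hval x]
  have hsumnorm : Summable (fun x : ℕ+ => ∫ s in Ioi (0 : ℝ), ‖F x s‖) := by
    have hg : Summable (fun x : ℕ+ => C * Real.Gamma α * |z| ^ (x : ℕ)) := by
      have h : Summable (fun n : ℕ => C * Real.Gamma α * |z| ^ n) :=
        (summable_geometric_of_lt_one (abs_nonneg z) hz).mul_left _
      exact h.comp_injective (fun a b hab => by exact_mod_cast PNat.coe_injective (by exact_mod_cast hab))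
    refine Summable.of_nonneg_of_le (fun x => ?_) (fun x => ?_) hg
    · exact integral_nonneg (fun s => norm_nonneg _)
    · rw [hnorm x]
      have h1 : (1 / (x : ℝ)) ^ α ≤ 1 := by
        refine Real.rpow_le_one (by positivity) ?_ (by linarith)
        rw [div_le_one (by positivity)]
        exact_mod_cast x.one_le
      have h2 : (0:ℝ) ≤ |z| ^ (x : ℕ) := by positivity
      calc C * (|z| ^ (x : ℕ) * ((1 / (x : ℝ)) ^ α * Real.Gamma α))
          ≤ C * (|z| ^ (x : ℕ) * (1 * Real.Gamma α)) := by
            apply mul_le_mul_of_nonneg_left _ hCpos.le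
            apply mul_le_mul_of_nonneg_left _ h2
            exact mul_le_mul_of_nonneg_right h1 hGpos.le
        _ = C * Real.Gamma α * |z| ^ (x : ℕ) := by ring
  -- pointwise identity on Ioi 0
  have key : ∀ s ∈ Ioi (0 : ℝ),
      ((Real.exp s - 1) * z / (Real.exp s - z)) *
          (s ^ (α - 1) / ((Real.exp s - 1) * Z * Real.Gamma α))
        = ∑' x : ℕ+, F x s := by
    intro s hs
    have hs0 : (0:ℝ) < s := hs
    have hE : 1 < Real.exp s := by
      rw [← Real.exp_zero]; exact Real.exp_lt_exp.mpr hs0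
    have hE1 : Real.exp s - 1 ≠ 0 := by linarith
    have hEz : Real.exp s - z ≠ 0 := by nlinarith
    set w : ℝ := z * Real.exp (-s) with hwdef
    have hwabs : |w| < 1 := by
      rw [hwdef, abs_mul, abs_of_pos (Real.exp_pos _)]
      calc |z| * Real.exp (-s) ≤ |z| * 1 :=
            mul_le_mul_of_nonneg_left (by
              rw [Real.exp_le_one_iff]; linarith) (abs_nonneg z)
        _ = |z| := mul_one _
        _ < 1 := hz
    have hterm : ∀ x : ℕ+, F x s = C * s ^ (α - 1) * w ^ (x : ℕ) := by
      intro x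
      simp only [hFdef, hwdef]
      have : Real.exp (-((x : ℕ) * s)) = Real.exp (-s) ^ (x : ℕ) := by
        rw [← Real.exp_nat_mul]; ring_nf
      rw [this, mul_pow]; ring
    rw [tsum_congr hterm, tsum_mul_left, tsum_pnat_pow hwabs]
    have h1w : 1 - w = (Real.exp s - z) / Real.exp s := by
      rw [hwdef, Real.exp_neg]
      field_simp
    have h1wne : 1 - w ≠ 0 := by
      rw [h1w]
      exact div_ne_zero hEz (Real.exp_ne_zero s)
    rw [hwdef, h1w, Real.exp_neg, hCdef]
    field_simp
  rw [setIntegral_congr_fun measurableSet_Ioi key,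
    ← MeasureTheory.integral_tsum_of_summable_integral_norm hint hsumnorm]
  have hFint : ∀ x : ℕ+,
      ∫ s in Ioi (0 : ℝ), F x s
        = (1 / Z) * (z ^ (x : ℕ) * (x : ℝ) ^ (-α)) := by
    intro x
    rw [hFdef]
    simp only
    rw [integral_const_mul, integral_const_mul, hval x, hCdef]
    have hx0 : (0:ℝ) < (x : ℝ) := by positivity
    have : (1 / (x : ℝ)) ^ α = (x : ℝ) ^ (-α) := by
      rw [one_div, ← Real.rpow_neg_one ((x : ℝ)), ← Real.rpow_mul hx0.le]
      norm_num
    rw [this]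
    field_simp
  rw [tsum_congr hFint, tsum_mul_left]
end

section
/- Let α > 0 be real and let z be real with 0 < |z| < 1. Then the polylogarithm series admits the Bose–Einstein integral representation: ∑_{x=1}^∞ z^x / x^α = (1/Γ(α)) · ∫₀^∞ t^{α-1} / (e^t/z − 1) dt. -/
open MeasureTheory Real Set

lemma tsum_pnat_geometric {r : ℝ} (hr : |r| < 1) :
    ∑' n : ℕ+, r ^ (n : ℕ) = r / (1 - r) := by
  rw [← Equiv.pnatEquivNat.symm.tsum_eq (fun n : ℕ+ => r ^ (n : ℕ))]
  have : ∀ m : ℕ, r ^ ((Equiv.pnatEquivNat.symm m : ℕ+) : ℕ) = r * r ^ m := by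
    intro m
    simp [Equiv.pnatEquivNat, pow_succ, mul_comm]
  rw [tsum_congr this, tsum_mul_left, tsum_geometric_of_abs_lt_one hr]
  have h1 : (1 : ℝ) - r ≠ 0 := by
    intro h; rw [sub_eq_zero] at h; rw [← h] at hr; simp at hr
  field_simp

lemma pnat_summable_aux {c r : ℝ} (hc : 0 ≤ c) (hr0 : 0 ≤ r) (hr1 : r < 1) {α : ℝ}
    (hα : 0 < α) : Summable (fun n : ℕ+ => r ^ (n : ℕ) * ((1 / (n : ℝ)) ^ α * c)) := by
  have hg : Summable (fun n : ℕ => r ^ n * c) :=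
    (summable_geometric_of_lt_one hr0 hr1).mul_right c
  have := hg.subtype {n : ℕ | 0 < n}
  refine this.of_nonneg_of_le (fun n => ?_) (fun n => ?_)
  · positivity
  · have hn1 : (1:ℝ) ≤ (n : ℕ+) := by exact_mod_cast n.one_le
    have h1 : ((1:ℝ) / (n : ℝ)) ^ α ≤ 1 := by
      apply Real.rpow_le_one (by positivity)
      · rw [div_le_one (by positivity)]; exact_mod_cast n.one_le
      · exact hα.le
    calc r ^ (n : ℕ) * ((1 / (n : ℝ)) ^ α * c)
        ≤ r ^ (n : ℕ) * (1 * c) := by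
          apply mul_le_mul_of_nonneg_left (mul_le_mul_of_nonneg_right h1 hc) (by positivity)
      _ = r ^ (n : ℕ) * c := by ring

/-- The polylogarithm series Li_α(z) = ∑_{x≥1} z^x / x^α admits the Bose–Einstein
integral representation Li_α(z) = (1/Γ(α)) ∫₀^∞ t^(α-1) / (e^t/z - 1) dt,
for real α > 0 and real z with 0 < |z| < 1. -/
theorem polylog_bose_einstein (α : ℝ) (hα : 0 < α) (z : ℝ) (hz0 : 0 < |z|) (hz1 : |z| < 1) :
    (∑' x : ℕ+, z ^ (x : ℕ) / (x : ℝ) ^ α)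
      = (1 / Real.Gamma α) * ∫ t in Ioi (0 : ℝ), t ^ (α - 1) / (Real.exp t / z - 1) := by
  have hz : z ≠ 0 := fun h => by simp [h] at hz0
  have hΓ : 0 < Real.Gamma α := Real.Gamma_pos_of_pos hα
  set F : ℕ+ → ℝ → ℝ := fun n t => z ^ (n : ℕ) * (t ^ (α - 1) * Real.exp (-((n : ℝ) * t))) with hF
  -- integral of each term
  have hint : ∀ n : ℕ+, ∫ t in Ioi (0 : ℝ), F n t
      = z ^ (n : ℕ) * ((1 / (n : ℝ)) ^ α * Real.Gamma α) := by
    intro n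
    rw [hF]
    rw [MeasureTheory.integral_const_mul, Real.integral_rpow_mul_exp_neg_mul_Ioi hα (by positivity)]
  -- integrability of each term
  have hInt : ∀ n : ℕ+, IntegrableOn (F n) (Ioi 0) := by
    intro n
    have h := (integrableOn_rpow_mul_exp_neg_mul_rpow (p := 1) (s := α - 1) (b := (n : ℝ))
      (by linarith) zero_lt_one (by positivity)).const_mul (z ^ (n : ℕ))
    refine IntegrableOn.congr_fun h (fun t ht => ?_) measurableSet_Ioi
    simp [hF, Real.rpow_one]
  -- summability of norms of integrals
  have heq : ∀ n : ℕ+, (∫ t in Ioi (0 : ℝ), ‖F n t‖)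
      = |z| ^ (n : ℕ) * ((1 / (n : ℝ)) ^ α * Real.Gamma α) := by
    intro n
    rw [← Real.integral_rpow_mul_exp_neg_mul_Ioi hα (show (0:ℝ) < (n:ℝ) by positivity),
      ← MeasureTheory.integral_const_mul]
    refine setIntegral_congr_fun measurableSet_Ioi (fun t ht => ?_)
    have ht0 : (0:ℝ) < t := ht
    rw [hF]
    rw [norm_mul, norm_mul, norm_pow, Real.norm_eq_abs, Real.norm_eq_abs, Real.norm_eq_abs,
      abs_of_nonneg (Real.rpow_nonneg ht0.le _), abs_of_nonneg (Real.exp_pos _).le]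
  have hsum : Summable (fun n : ℕ+ => ∫ t in Ioi (0 : ℝ), ‖F n t‖) := by
    rw [summable_congr heq]
    exact pnat_summable_aux hΓ.le (abs_nonneg z) hz1 hα
  -- swap sum and integral
  have hswap := MeasureTheory.integral_tsum_of_summable_integral_norm hInt hsum
  -- pointwise identity
  have hpt : ∀ t ∈ Ioi (0:ℝ), (∑' n : ℕ+, F n t) = t ^ (α - 1) / (Real.exp t / z - 1) := by
    intro t ht
    have ht0 : (0:ℝ) < t := ht
    have hre : |z * Real.exp (-t)| < 1 := by
      rw [abs_mul, abs_of_nonneg (Real.exp_pos _).le]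
      calc |z| * Real.exp (-t) ≤ |z| * 1 := by
            apply mul_le_mul_of_nonneg_left _ (abs_nonneg z)
            exact Real.exp_le_one_iff.mpr (by linarith)
        _ < 1 := by linarith
    have h1 : ∀ n : ℕ+, F n t = t ^ (α - 1) * (z * Real.exp (-t)) ^ (n : ℕ) := by
      intro n
      rw [hF, mul_pow, ← Real.exp_nat_mul]
      push_cast
      ring_nf
    rw [tsum_congr h1, tsum_mul_left, tsum_pnat_geometric hre]
    have hez : Real.exp t - z ≠ 0 := by
      have : |z| < Real.exp t := lt_trans hz1 (by
        have := Real.add_one_lt_exp (x := t) (by linarith); linarith)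
      have := abs_lt.mp this
      intro h; nlinarith [this.1, this.2]
    have hexp : Real.exp t ≠ 0 := (Real.exp_pos t).ne'
    have hd1 : 1 - z * Real.exp (-t) ≠ 0 := by
      rw [Real.exp_neg]
      field_simp
      intro h
      exact hez (by rcases div_eq_zero_iff.mp h with h | h; exact h; exact absurd h hexp)
    rw [Real.exp_neg] at *
    field_simp
  rw [setIntegral_congr_fun measurableSet_Ioi hpt] at hswap
  rw [← hswap]
  have h2 : ∀ n : ℕ+, (∫ t in Ioi (0 : ℝ), F n t)
      = Real.Gamma α * (z ^ (n : ℕ) / (n : ℝ) ^ α) := by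
    intro n
    rw [hint n, Real.div_rpow (by norm_num) (by positivity), Real.one_rpow]
    field_simp
  rw [tsum_congr h2, tsum_mul_left]
  field_simp
end

section
/- Let α > 1 be real. For every positive integer x, the zero-truncated Poisson probability mass e^{-λ}·λ^x / ((1 − e^{-λ})·x!) integrated against the mixing density f(λ; α) = (e^λ − 1)·(∫₀^∞ e^{s − λ e^s}·s^{α-1} ds) / (Γ(α)·ζ(α)) equals the Zipf probability mass: ∫₀^∞ [e^{-λ}·λ^x / ((1 − e^{-λ})·x!)] · (e^λ − 1)·(∫₀^∞ e^{s − λ e^s}·s^{α-1} ds) / (Γ(α)·ζ(α)) dλ = x^{-α} / ζ(α). (Theorem 2(a), PMF form: the Zipf(α) distribution is a mixture of zero-truncated Poisson distributions.) -/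
open MeasureTheory Real Set

private lemma int_rpow_exp {e b : ℝ} (he : -1 < e) (hb : 0 < b) :
    IntegrableOn (fun t : ℝ => t ^ e * Real.exp (-(b * t))) (Ioi 0) := by
  have h := integrableOn_rpow_mul_exp_neg_mul_rpow (p := 1) he one_pos hb
  refine h.congr_fun (fun t ht => ?_) measurableSet_Ioi
  simp only [Real.rpow_one, neg_mul]

private lemma int_pow_exp {b : ℝ} (hb : 0 < b) (x : ℕ) :
    IntegrableOn (fun l : ℝ => l ^ x * Real.exp (-(b * l))) (Ioi 0) := by
  have h := int_rpow_exp (e := (x : ℝ)) (lt_of_lt_of_le neg_one_lt_zero (Nat.cast_nonneg x)) hb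
  refine h.congr_fun (fun t ht => ?_) measurableSet_Ioi
  simp only [Real.rpow_natCast]

private lemma val_pow_exp {b : ℝ} (hb : 0 < b) (x : ℕ) :
    ∫ l in Ioi (0 : ℝ), l ^ x * Real.exp (-(b * l))
      = (1 / b) ^ ((x : ℝ) + 1) * (x.factorial : ℝ) := by
  have h := Real.integral_rpow_mul_exp_neg_mul_Ioi (a := (x : ℝ) + 1) (by positivity) hb
  rw [add_sub_cancel_right] at h
  simp only [Real.rpow_natCast] at h
  rw [h, Real.Gamma_nat_eq_factorial]

private lemma inner_val (α : ℝ) (x : ℕ) (s : ℝ) :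
    ∫ l in Ioi (0 : ℝ), l ^ x * (Real.exp (s - l * Real.exp s) * s ^ (α - 1))
      = (x.factorial : ℝ) * (s ^ (α - 1) * Real.exp (-((x : ℝ) * s))) := by
  have h1 : (fun l : ℝ => l ^ x * (Real.exp (s - l * Real.exp s) * s ^ (α - 1)))
      = fun l : ℝ => (Real.exp s * s ^ (α - 1)) * (l ^ x * Real.exp (-(Real.exp s * l))) := by
    funext l
    rw [show s - l * Real.exp s = s + -(Real.exp s * l) by ring, Real.exp_add]
    ring
  rw [h1, MeasureTheory.integral_const_mul, val_pow_exp (Real.exp_pos s) x]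
  have h2 : (1 / Real.exp s) ^ ((x : ℝ) + 1) = Real.exp (-s * ((x : ℝ) + 1)) := by
    rw [one_div, ← Real.exp_neg, ← Real.exp_mul]
  rw [h2]
  rw [show Real.exp s * s ^ (α - 1) * (Real.exp (-s * ((x : ℝ) + 1)) * (x.factorial : ℝ))
      = (x.factorial : ℝ) * (s ^ (α - 1) * (Real.exp s * Real.exp (-s * ((x : ℝ) + 1)))) by ring,
    ← Real.exp_add]
  ring_nf

/-- **Theorem 2(a) (PMF form).** The Zipf(α) distribution is a mixture of
zero-truncated Poisson distributions, with mixing density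
f(λ; α) = (e^λ - 1) (∫₀^∞ e^(s - λ e^s) s^(α-1) ds) / (Γ(α) ζ(α)). -/
theorem zipf_is_mztp_pmf (α : ℝ) (hα : 1 < α) (x : ℕ) (hx : 0 < x) :
    ∫ l in Ioi (0 : ℝ),
        (Real.exp (-l) * l ^ (x : ℕ) / ((1 - Real.exp (-l)) * (Nat.factorial x))) *
          ((Real.exp l - 1) *
              (∫ s in Ioi (0 : ℝ), Real.exp (s - l * Real.exp s) * s ^ (α - 1)) /
            (Real.Gamma α * (∑' n : ℕ+, (n : ℝ) ^ (-α))))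
      = (x : ℝ) ^ (-α) / (∑' n : ℕ+, (n : ℝ) ^ (-α)) := by
  have hx0 : (0 : ℝ) < x := by exact_mod_cast hx
  set Z := ∑' n : ℕ+, (n : ℝ) ^ (-α) with hZdef
  have hZsum : Summable (fun n : ℕ+ => (n : ℝ) ^ (-α)) := by
    have h1 : Summable (fun n : ℕ => (n : ℝ) ^ (-α)) :=
      Real.summable_nat_rpow.mpr (by linarith)
    exact h1.comp_injective (fun a b h => PNat.coe_injective h)
  have hZpos : 0 < Z := by
    refine Summable.tsum_pos hZsum (fun n => Real.rpow_nonneg (by positivity) _) 1 ?_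
    exact Real.rpow_pos_of_pos (by norm_num) _
  have hΓ : 0 < Real.Gamma α := Real.Gamma_pos_of_pos (by linarith)
  have hfac : (0 : ℝ) < (x.factorial : ℝ) := by exact_mod_cast Nat.factorial_pos x
  -- measurability of the two-variable function (s, l)
  have hmeas : Measurable (fun z : ℝ × ℝ =>
      z.2 ^ x * (Real.exp (z.1 - z.2 * Real.exp z.1) * z.1 ^ (α - 1))) := by
    fun_prop
  -- integrability of the (s, l) version on the product
  have hH : Integrable (fun z : ℝ × ℝ =>
      z.2 ^ x * (Real.exp (z.1 - z.2 * Real.exp z.1) * z.1 ^ (α - 1)))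
      ((volume.restrict (Ioi 0)).prod (volume.restrict (Ioi 0))) := by
    rw [integrable_prod_iff hmeas.aestronglyMeasurable]
    constructor
    · refine Filter.Eventually.of_forall fun s => ?_
      have h1 : (fun l : ℝ => l ^ x * (Real.exp (s - l * Real.exp s) * s ^ (α - 1)))
          = fun l : ℝ =>
            (Real.exp s * s ^ (α - 1)) * (l ^ x * Real.exp (-(Real.exp s * l))) := by
        funext l
        rw [show s - l * Real.exp s = s + -(Real.exp s * l) by ring, Real.exp_add]
        ring
      simpa [h1] using ((int_pow_exp (Real.exp_pos s) x).const_mul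
        (Real.exp s * s ^ (α - 1)))
    · refine (((int_rpow_exp (by linarith : (-1 : ℝ) < α - 1) hx0).const_mul
        ((x.factorial : ℝ))).congr ?_)
      filter_upwards [ae_restrict_mem measurableSet_Ioi] with s hs
      rw [← inner_val α x s]
      refine setIntegral_congr_fun measurableSet_Ioi fun l hl => ?_
      have hl' : (0 : ℝ) < l := hl
      have hs' : (0 : ℝ) < s := hs
      rw [Real.norm_eq_abs, abs_of_nonneg (by positivity)]
  -- swap of iterated integrals
  have hswap : (∫ l in Ioi (0 : ℝ), ∫ s in Ioi (0 : ℝ),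
        l ^ x * (Real.exp (s - l * Real.exp s) * s ^ (α - 1)))
      = ∫ s in Ioi (0 : ℝ), ∫ l in Ioi (0 : ℝ),
        l ^ x * (Real.exp (s - l * Real.exp s) * s ^ (α - 1)) := by
    exact MeasureTheory.integral_integral_swap hH.swap
  -- step 1: simplify the integrand
  have step1 : (∫ l in Ioi (0 : ℝ),
        (Real.exp (-l) * l ^ (x : ℕ) / ((1 - Real.exp (-l)) * (Nat.factorial x))) *
          ((Real.exp l - 1) *
              (∫ s in Ioi (0 : ℝ), Real.exp (s - l * Real.exp s) * s ^ (α - 1)) /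
            (Real.Gamma α * Z)))
      = (∫ l in Ioi (0 : ℝ), ∫ s in Ioi (0 : ℝ),
          l ^ x * (Real.exp (s - l * Real.exp s) * s ^ (α - 1)))
        * ((x.factorial : ℝ) * (Real.Gamma α * Z))⁻¹ := by
    rw [← MeasureTheory.integral_mul_const]
    refine setIntegral_congr_fun measurableSet_Ioi fun l hl => ?_
    have hl' : (0 : ℝ) < l := hl
    have h1 : (0 : ℝ) < 1 - Real.exp (-l) := by
      have := Real.exp_lt_one_iff.mpr (neg_lt_zero.mpr hl')
      linarith
    have key : Real.exp (-l) * (Real.exp l - 1) = 1 - Real.exp (-l) := by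
      rw [mul_sub, ← Real.exp_add, neg_add_cancel, Real.exp_zero, mul_one]
    rw [MeasureTheory.integral_const_mul]
    set I := ∫ s in Ioi (0 : ℝ), Real.exp (s - l * Real.exp s) * s ^ (α - 1)
    have hee : Real.exp (-l) * Real.exp l = 1 := by
      rw [← Real.exp_add]; simp
    field_simp
    linear_combination I * hee
  rw [step1, hswap]
  simp only [inner_val α x]
  rw [MeasureTheory.integral_const_mul,
    Real.integral_rpow_mul_exp_neg_mul_Ioi (by linarith : (0 : ℝ) < α) hx0]
  have hpow : (1 / (x : ℝ)) ^ α = (x : ℝ) ^ (-α) := by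
    rw [one_div, Real.inv_rpow hx0.le, ← Real.rpow_neg hx0.le]
  rw [hpow]
  field_simp
end

section
/- Let α > 1 be real. The mixing density of Theorem 2(a) integrates to one: ∫₀^∞ (e^λ − 1)·(∫₀^∞ e^{s − λ e^s}·s^{α-1} ds) dλ = Γ(α)·ζ(α). -/
open MeasureTheory Real Set

lemma aux_exp_int (r : ℝ) (hr : 0 < r) : ∫ l in Ioi (0:ℝ), Real.exp (-(r*l)) = 1/r := by
  have := Real.integral_rpow_mul_exp_neg_mul_Ioi (one_pos) hr
  simpa [Real.Gamma_one, Real.rpow_one] using this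

-- pointwise identity
lemma aux_ident (c l s : ℝ) :
    (Real.exp l - 1) * (Real.exp (s - l * Real.exp s) * c)
      = (c * Real.exp s) * (Real.exp (-((Real.exp s - 1) * l)) - Real.exp (-(Real.exp s * l))) := by
  rw [show s - l * Real.exp s = s + (-(l * Real.exp s)) by ring, Real.exp_add,
    show -((Real.exp s - 1) * l) = l + (-(l * Real.exp s)) by ring, Real.exp_add,
    show -(Real.exp s * l) = -(l * Real.exp s) by ring]
  ring

-- the inner λ-integral
lemma aux_lam (α : ℝ) {s : ℝ} (hs : 0 < s) :
    ∫ l in Ioi (0:ℝ), (Real.exp l - 1) * (Real.exp (s - l * Real.exp s) * s ^ (α-1))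
      = s ^ (α-1) / (Real.exp s - 1) := by
  have hes : 1 < Real.exp s := by
    rw [← Real.exp_zero]; exact Real.exp_lt_exp.2 hs
  have h1 : (0:ℝ) < Real.exp s - 1 := by linarith
  have h2 : (0:ℝ) < Real.exp s := Real.exp_pos s
  rw [setIntegral_congr_fun measurableSet_Ioi (fun l _ => aux_ident (s ^ (α-1)) l s)]
  rw [MeasureTheory.integral_const_mul]
  have i1 : IntegrableOn (fun l : ℝ => Real.exp (-((Real.exp s - 1) * l))) (Ioi 0) := by
    have := exp_neg_integrableOn_Ioi 0 h1
    simp only [neg_mul] at this; exact this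
  have i2 : IntegrableOn (fun l : ℝ => Real.exp (-(Real.exp s * l))) (Ioi 0) := by
    have := exp_neg_integrableOn_Ioi 0 h2
    simp only [neg_mul] at this; exact this
  rw [MeasureTheory.integral_sub i1 i2, aux_exp_int _ h1, aux_exp_int _ h2]
  field_simp
  ring

lemma aux_pnat_hasSum {r : ℝ} (h0 : 0 ≤ r) (h1 : r < 1) :
    HasSum (fun n : ℕ+ => r ^ (n:ℕ)) (r / (1-r)) := by
  have h2 : HasSum (fun n : ℕ => r ^ (n+1)) (r / (1-r)) := by
    have := (hasSum_geometric_of_lt_one h0 h1).mul_left r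
    simpa [pow_succ, mul_comm, div_eq_mul_inv] using this
  rw [← Equiv.pnatEquivNat.symm.hasSum_iff]
  exact h2

-- tsum identity on Ioi 0
lemma aux_tsum (α : ℝ) {s : ℝ} (hs : 0 < s) :
    HasSum (fun n : ℕ+ => s ^ (α-1) * Real.exp (-((n:ℝ) * s)))
      (s ^ (α-1) / (Real.exp s - 1)) := by
  have hr0 : (0:ℝ) ≤ Real.exp (-s) := (Real.exp_pos _).le
  have hr1 : Real.exp (-s) < 1 := by
    rw [Real.exp_lt_one_iff]; linarith
  have h := (aux_pnat_hasSum hr0 hr1).mul_left (s ^ (α-1))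
  have hes : 1 < Real.exp s := by rw [← Real.exp_zero]; exact Real.exp_lt_exp.2 hs
  have hval : Real.exp (-s) / (1 - Real.exp (-s)) = 1 / (Real.exp s - 1) := by
    have h1 : Real.exp s ≠ 0 := (Real.exp_pos s).ne'
    have h2 : Real.exp s - 1 ≠ 0 := by linarith
    have h3 : 1 - Real.exp (-s) ≠ 0 := by
      rw [Real.exp_neg]
      have : (Real.exp s)⁻¹ < 1 := by
        rw [inv_lt_one_iff₀]; right; exact hes
      linarith
    rw [Real.exp_neg] at h3 ⊢
    field_simp
  convert h using 1
  · rfl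
  · funext n
    rw [← Real.exp_nat_mul]
    congr 2
    push_cast [mul_comm]
    ring
  · rw [hval, mul_one_div]

-- each term integrable
lemma aux_term_int (α : ℝ) (hα : 1 < α) (n : ℕ+) :
    IntegrableOn (fun t : ℝ => t ^ (α-1) * Real.exp (-((n:ℝ) * t))) (Ioi 0) := by
  have := integrableOn_rpow_mul_exp_neg_mul_rpow (p := 1) (s := α-1) (b := (n:ℝ))
    (by linarith) one_pos (by exact_mod_cast n.pos)
  simp only [Real.rpow_one, neg_mul] at this ⊢
  exact this

-- integrability of the limit function
lemma aux_f_int (α : ℝ) (hα : 1 < α) :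
    IntegrableOn (fun s : ℝ => s ^ (α-1) / (Real.exp s - 1)) (Ioi 0) := by
  have hmeas : AEStronglyMeasurable (fun s : ℝ => s ^ (α-1) / (Real.exp s - 1))
      (volume.restrict (Ioi 0)) := by
    apply Measurable.aestronglyMeasurable
    exact ((Real.continuous_rpow_const (by linarith : (0:ℝ) ≤ α - 1)).measurable).div
      (Real.measurable_exp.sub measurable_const)
  have key : Ioi (0:ℝ) = Ioc 0 1 ∪ Ioi 1 := (Ioc_union_Ioi_eq_Ioi zero_le_one).symm
  have h1 : IntegrableOn (fun s : ℝ => s ^ (α-1) / (Real.exp s - 1)) (Ioc 0 1) := by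
    have hg : IntegrableOn (fun s : ℝ => s ^ (α-2)) (Ioc 0 1) :=
      (intervalIntegral.intervalIntegrable_rpow' (by linarith : (-1:ℝ) < α - 2)).1
    refine Integrable.mono hg (hmeas.mono_set (Ioc_subset_Ioi_self)) ?_
    filter_upwards [ae_restrict_mem measurableSet_Ioc] with s hs
    have hs0 : (0:ℝ) < s := hs.1
    have hes : (0:ℝ) < Real.exp s - 1 := by
      have : 1 < Real.exp s := by rw [← Real.exp_zero]; exact Real.exp_lt_exp.2 hs0
      linarith
    have hb : s ^ (α-1) / (Real.exp s - 1) ≤ s ^ (α-2) := by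
      have h3 : s ≤ Real.exp s - 1 := by linarith [Real.add_one_le_exp s]
      have := div_le_div_of_nonneg_left (Real.rpow_nonneg hs0.le (α-1)) hs0 h3
      calc s ^ (α-1) / (Real.exp s - 1) ≤ s ^ (α-1) / s := this
        _ = s ^ (α-2) := by
          conv_rhs => rw [show α - 2 = (α-1) - 1 by ring, Real.rpow_sub hs0, Real.rpow_one]
    rw [Real.norm_of_nonneg (by positivity), Real.norm_of_nonneg (by positivity)]
    exact hb
  have h2 : IntegrableOn (fun s : ℝ => s ^ (α-1) / (Real.exp s - 1)) (Ioi 1) := by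
    have hg : IntegrableOn (fun s : ℝ => 2 * (Real.exp (-s) * s ^ (α-1))) (Ioi 1) :=
      ((Real.GammaIntegral_convergent (by linarith : (0:ℝ) < α)).mono_set
        (Ioi_subset_Ioi zero_le_one)).const_mul 2
    refine Integrable.mono hg (hmeas.mono_set (Ioi_subset_Ioi zero_le_one)) ?_
    filter_upwards [ae_restrict_mem measurableSet_Ioi] with s hs
    have hs1 : (1:ℝ) < s := hs
    have hs0 : (0:ℝ) < s := by linarith
    have h2e : (2:ℝ) ≤ Real.exp s := by
      have := Real.add_one_le_exp 1
      have hm : Real.exp 1 ≤ Real.exp s := Real.exp_le_exp.2 hs1.le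
      linarith
    have hes : (0:ℝ) < Real.exp s - 1 := by linarith
    have hb : s ^ (α-1) / (Real.exp s - 1) ≤ 2 * (Real.exp (-s) * s ^ (α-1)) := by
      have hhalf : Real.exp s / 2 ≤ Real.exp s - 1 := by linarith
      have := div_le_div_of_nonneg_left (Real.rpow_nonneg hs0.le (α-1))
        (by positivity : (0:ℝ) < Real.exp s / 2) hhalf
      calc s ^ (α-1) / (Real.exp s - 1) ≤ s ^ (α-1) / (Real.exp s / 2) := this
        _ = 2 * (Real.exp (-s) * s ^ (α-1)) := by
          rw [Real.exp_neg]
          field_simp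
    rw [Real.norm_of_nonneg (by positivity), Real.norm_of_nonneg (by positivity)]
    exact hb
  rw [key]
  exact h1.union h2

-- summability and s-integral
lemma aux_summable (α : ℝ) (hα : 1 < α) : Summable (fun n : ℕ+ => (n:ℝ) ^ (-α)) := by
  have : Summable (fun n : ℕ => (n:ℝ) ^ (-α)) :=
    Real.summable_nat_rpow.mpr (by linarith)
  exact this.subtype _

lemma aux_sum_int (α : ℝ) (hα : 1 < α) (n : ℕ+) :
    ∫ t in Ioi (0:ℝ), t ^ (α-1) * Real.exp (-((n:ℝ) * t))
      = Real.Gamma α * (n:ℝ) ^ (-α) := by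
  rw [Real.integral_rpow_mul_exp_neg_mul_Ioi (by linarith : (0:ℝ) < α)
    (by exact_mod_cast n.pos : (0:ℝ) < (n:ℝ))]
  rw [one_div, Real.inv_rpow (by positivity), ← Real.rpow_neg (by positivity)]
  ring

lemma aux_s_int (α : ℝ) (hα : 1 < α) :
    ∫ s in Ioi (0:ℝ), s ^ (α-1) / (Real.exp s - 1)
      = Real.Gamma α * ∑' n : ℕ+, (n:ℝ) ^ (-α) := by
  have hnorm : ∀ n : ℕ+, ∫ t in Ioi (0:ℝ), ‖t ^ (α-1) * Real.exp (-((n:ℝ) * t))‖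
      = Real.Gamma α * (n:ℝ) ^ (-α) := by
    intro n
    rw [← aux_sum_int α hα n]
    refine setIntegral_congr_fun measurableSet_Ioi (fun t ht => ?_)
    rw [Real.norm_of_nonneg (mul_nonneg (Real.rpow_nonneg (le_of_lt ht) _) (Real.exp_pos _).le)]
  have hsum : Summable (fun n : ℕ+ => ∫ t in Ioi (0:ℝ),
      ‖t ^ (α-1) * Real.exp (-((n:ℝ) * t))‖) := by
    simp_rw [hnorm]
    exact (aux_summable α hα).mul_left _
  have h := MeasureTheory.hasSum_integral_of_summable_integral_norm
    (fun n => aux_term_int α hα n) hsum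
  have h2 : (∫ t in Ioi (0:ℝ), ∑' n : ℕ+, t ^ (α-1) * Real.exp (-((n:ℝ) * t)))
      = ∫ s in Ioi (0:ℝ), s ^ (α-1) / (Real.exp s - 1) :=
    setIntegral_congr_fun measurableSet_Ioi (fun t ht => (aux_tsum α ht).tsum_eq)
  rw [h2] at h
  have h3 := h.tsum_eq
  simp_rw [aux_sum_int α hα] at h3
  rw [← h3, tsum_mul_left]

/-- The mixing density of Theorem 2(a) integrates to one:
∫₀^∞ (e^λ - 1) (∫₀^∞ e^(s - λ e^s) s^(α-1) ds) dλ = Γ(α) ζ(α). -/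
theorem mztp_mixing_density_integrates_to_one (α : ℝ) (hα : 1 < α) :
    ∫ l in Ioi (0 : ℝ),
        (Real.exp l - 1) * ∫ s in Ioi (0 : ℝ), Real.exp (s - l * Real.exp s) * s ^ (α - 1)
      = Real.Gamma α * (∑' n : ℕ+, (n : ℝ) ^ (-α)) := by
  have hKc : Continuous (fun p : ℝ × ℝ =>
      (Real.exp p.1 - 1) * (Real.exp (p.2 - p.1 * Real.exp p.2) * p.2 ^ (α-1))) := by
    have hrp : Continuous (fun x : ℝ => x ^ (α-1)) :=
      Real.continuous_rpow_const (by linarith)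
    exact ((Real.continuous_exp.comp continuous_fst).sub continuous_const).mul
      ((Real.continuous_exp.comp (continuous_snd.sub
        (continuous_fst.mul (Real.continuous_exp.comp continuous_snd)))).mul
        (hrp.comp continuous_snd))
  set μ : Measure ℝ := volume.restrict (Ioi 0) with hμ
  have hK_nonneg : ∀ l ∈ Ioi (0:ℝ), ∀ s ∈ Ioi (0:ℝ),
      0 ≤ (Real.exp l - 1) * (Real.exp (s - l * Real.exp s) * s ^ (α-1)) := by
    intro l hl s hs
    have h1 : (1:ℝ) ≤ Real.exp l := by
      rw [← Real.exp_zero]; exact Real.exp_le_exp.2 (le_of_lt hl)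
    exact mul_nonneg (by linarith)
      (mul_nonneg (Real.exp_pos _).le (Real.rpow_nonneg (le_of_lt hs) _))
  -- integrability in l for fixed s > 0
  have hl_int : ∀ s : ℝ, 0 < s → Integrable
      (fun l => (Real.exp l - 1) * (Real.exp (s - l * Real.exp s) * s ^ (α-1))) μ := by
    intro s hs
    have hes : 1 < Real.exp s := by rw [← Real.exp_zero]; exact Real.exp_lt_exp.2 hs
    have i1 : IntegrableOn (fun l : ℝ => Real.exp (-((Real.exp s - 1) * l))) (Ioi 0) := by
      have := exp_neg_integrableOn_Ioi 0 (by linarith : (0:ℝ) < Real.exp s - 1)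
      simp only [neg_mul] at this; exact this
    have i2 : IntegrableOn (fun l : ℝ => Real.exp (-(Real.exp s * l))) (Ioi 0) := by
      have := exp_neg_integrableOn_Ioi 0 (Real.exp_pos s)
      simp only [neg_mul] at this; exact this
    have := ((i1.sub i2).const_mul (s ^ (α-1) * Real.exp s))
    refine this.congr ?_
    filter_upwards with l
    exact (aux_ident (s ^ (α-1)) l s).symm
  -- product integrability
  have hprod : Integrable (Function.uncurry (fun l s =>
      (Real.exp l - 1) * (Real.exp (s - l * Real.exp s) * s ^ (α-1)))) (μ.prod μ) := by
    refine (MeasureTheory.integrable_prod_iff' hKc.aestronglyMeasurable).2 ⟨?_, ?_⟩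
    · filter_upwards [ae_restrict_mem measurableSet_Ioi] with s hs
      exact hl_int s hs
    · refine (aux_f_int α hα).congr ?_
      filter_upwards [ae_restrict_mem measurableSet_Ioi] with s hs
      rw [← aux_lam α hs]
      refine (setIntegral_congr_fun measurableSet_Ioi (fun l hl => ?_)).symm
      rw [Real.norm_of_nonneg (hK_nonneg l hl s hs)]
  -- rewrite outer integrand
  have hout : ∫ l in Ioi (0:ℝ),
        (Real.exp l - 1) * ∫ s in Ioi (0:ℝ), Real.exp (s - l * Real.exp s) * s ^ (α - 1)
      = ∫ l in Ioi (0:ℝ), ∫ s in Ioi (0:ℝ),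
        (Real.exp l - 1) * (Real.exp (s - l * Real.exp s) * s ^ (α-1)) := by
    refine setIntegral_congr_fun measurableSet_Ioi (fun l _ => ?_)
    rw [MeasureTheory.integral_const_mul]
  rw [hout]
  rw [MeasureTheory.integral_integral_swap hprod]
  rw [setIntegral_congr_fun measurableSet_Ioi (fun s hs => aux_lam α hs)]
  exact aux_s_int α hα
end

section
/- Let α > 1 be real and let z be real with |z| < 1. Then the probability generating function of the zero-truncated Poisson distribution, integrated against the mixing density f(λ; α) = (e^λ − 1)·(∫₀^∞ e^{s − λ e^s}·s^{α-1} ds) / (Γ(α)·ζ(α)), equals the probability generating function of the Zipf(α) distribution: ∫₀^∞ ((e^{λz} − 1)/(e^λ − 1)) · (e^λ − 1)·(∫₀^∞ e^{s − λ e^s}·s^{α-1} ds) / (Γ(α)·ζ(α)) dλ = (1/ζ(α)) · ∑_{x=1}^∞ z^x · x^{-α}. (Theorem 2(a), PGF form.) -/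
open MeasureTheory Real Set Nat

private lemma integrableOn_rpow_exp {a b : ℝ} (ha : 0 < a) (hb : 0 < b) :
    IntegrableOn (fun t : ℝ => t ^ (a - 1) * Real.exp (-(b * t))) (Ioi 0) := by
  have h := integrableOn_rpow_mul_exp_neg_mul_rpow (p := 1) (s := a - 1) (b := b)
    (by linarith) one_pos hb
  refine h.congr_fun (fun t ht => ?_) measurableSet_Ioi
  beta_reduce; rw [Real.rpow_one, neg_mul]

private lemma integrableOn_pow_exp (n : ℕ) {b : ℝ} (hb : 0 < b) :
    IntegrableOn (fun t : ℝ => t ^ n * Real.exp (-(b * t))) (Ioi 0) := by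
  have h := integrableOn_rpow_exp (a := (n : ℝ) + 1) (by positivity) hb
  refine h.congr_fun (fun t ht => ?_) measurableSet_Ioi
  rw [show (n : ℝ) + 1 - 1 = (n : ℝ) by ring]; beta_reduce; rw [Real.rpow_natCast]

private lemma integral_pow_exp (n : ℕ) {b : ℝ} (hb : 0 < b) :
    ∫ t in Ioi (0 : ℝ), t ^ n * Real.exp (-(b * t)) = (n ! : ℝ) / b ^ (n + 1) := by
  have h := Real.integral_rpow_mul_exp_neg_mul_Ioi (a := (n : ℝ) + 1) (r := b)
    (by positivity) hb
  rw [show (n : ℝ) + 1 - 1 = (n : ℝ) by ring] at h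
  rw [show ∫ t in Ioi (0:ℝ), t ^ n * Real.exp (-(b * t))
      = ∫ t in Ioi (0:ℝ), t ^ (n : ℝ) * Real.exp (-(b * t)) from
    setIntegral_congr_fun measurableSet_Ioi (fun t ht => by
      rw [Real.rpow_natCast]), h]
  rw [show ((n : ℝ) + 1) = ((n + 1 : ℕ) : ℝ) by push_cast; ring, Real.rpow_natCast]
  rw [show (((n + 1 : ℕ)) : ℝ) = (n : ℝ) + 1 by push_cast; ring, Real.Gamma_nat_eq_factorial,
    one_div, inv_pow]
  field_simp

private lemma key_fubini (α : ℝ) (hα : 1 < α) (n : ℕ) (hn : 0 < n) :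
    Integrable (fun l => l ^ n *
        ∫ s in Ioi (0:ℝ), Real.exp (s - l * Real.exp s) * s ^ (α - 1))
        (volume.restrict (Ioi 0)) ∧
    (∫ l in Ioi (0:ℝ), l ^ n *
        ∫ s in Ioi (0:ℝ), Real.exp (s - l * Real.exp s) * s ^ (α - 1))
      = (n ! : ℝ) * (Real.Gamma α * (n : ℝ) ^ (-α)) := by
  set f : ℝ → ℝ → ℝ := fun s l => Real.exp (s - l * Real.exp s) * s ^ (α - 1) * l ^ n with hf
  have hfun : ∀ s l : ℝ, f s l
      = (Real.exp s * s ^ (α - 1)) * (l ^ n * Real.exp (-(Real.exp s * l))) := by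
    intro s l
    rw [hf]
    simp only
    rw [show s - l * Real.exp s = s + -(Real.exp s * l) by ring, Real.exp_add]
    ring
  have hInt_l : ∀ s : ℝ, IntegrableOn (fun l => f s l) (Ioi 0) := by
    intro s
    have h1 : IntegrableOn (fun l : ℝ => (Real.exp s * s ^ (α - 1)) *
        (l ^ n * Real.exp (-(Real.exp s * l)))) (Ioi 0) :=
      (integrableOn_pow_exp n (Real.exp_pos s)).const_mul _
    exact h1.congr_fun (fun l _ => (hfun s l).symm) measurableSet_Ioi
  have hval_l : ∀ s : ℝ, (∫ l in Ioi (0:ℝ), f s l)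
      = (n ! : ℝ) * (s ^ (α - 1) * Real.exp (-((n : ℝ) * s))) := by
    intro s
    calc (∫ l in Ioi (0:ℝ), f s l)
        = ∫ l in Ioi (0:ℝ), (Real.exp s * s ^ (α - 1)) *
            (l ^ n * Real.exp (-(Real.exp s * l))) := by
          exact setIntegral_congr_fun measurableSet_Ioi (fun l _ => hfun s l)
      _ = (Real.exp s * s ^ (α - 1)) *
            ∫ l in Ioi (0:ℝ), l ^ n * Real.exp (-(Real.exp s * l)) := by
          exact integral_const_mul _ _
      _ = (Real.exp s * s ^ (α - 1)) * ((n ! : ℝ) / (Real.exp s) ^ (n + 1)) := by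
          rw [integral_pow_exp n (Real.exp_pos s)]
      _ = (n ! : ℝ) * (s ^ (α - 1) * (Real.exp s / Real.exp (((n + 1 : ℕ) : ℝ) * s))) := by
          rw [← Real.exp_nat_mul]; ring
      _ = (n ! : ℝ) * (s ^ (α - 1) * Real.exp (-((n : ℝ) * s))) := by
          rw [← Real.exp_sub]
          congr 2
          push_cast
          ring
  have hmeas : AEStronglyMeasurable (Function.uncurry f)
      ((volume.restrict (Ioi (0:ℝ))).prod (volume.restrict (Ioi (0:ℝ)))) := by
    apply Measurable.aestronglyMeasurable
    have : Measurable fun p : ℝ × ℝ =>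
        Real.exp (p.1 - p.2 * Real.exp p.1) * p.1 ^ (α - 1) * p.2 ^ n := by
      measurability
    exact this
  have hnpos : (0:ℝ) < (n:ℝ) := by exact_mod_cast hn
  have htarget : IntegrableOn
      (fun s : ℝ => (n ! : ℝ) * (s ^ (α - 1) * Real.exp (-((n : ℝ) * s)))) (Ioi 0) := by
    have h1 : IntegrableOn (fun s : ℝ =>
        (n ! : ℝ) * (s ^ (α - 1) * Real.exp (-((n:ℝ) * s)))) (Ioi 0) :=
      (integrableOn_rpow_exp (by linarith : (0:ℝ) < α) hnpos).const_mul _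
    exact h1
  have hprod : Integrable (Function.uncurry f)
      ((volume.restrict (Ioi (0:ℝ))).prod (volume.restrict (Ioi (0:ℝ)))) := by
    rw [integrable_prod_iff hmeas]
    constructor
    · exact Filter.Eventually.of_forall (fun s => hInt_l s)
    · refine (htarget.congr ?_ : Integrable _ _)
      filter_upwards [ae_restrict_mem measurableSet_Ioi] with s hs
      have hnorm : ∀ l ∈ Ioi (0:ℝ), ‖f s l‖ = f s l := by
        intro l hl
        apply norm_of_nonneg
        have hs' : (0:ℝ) ≤ s := le_of_lt hs
        have hl' : (0:ℝ) ≤ l := le_of_lt hl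
        rw [hf]
        positivity
      rw [← hval_l s]
      exact (setIntegral_congr_fun measurableSet_Ioi hnorm).symm
  have hswap := integral_integral_swap hprod
  have hIl : ∀ l : ℝ, (∫ s in Ioi (0:ℝ), f s l)
      = l ^ n * ∫ s in Ioi (0:ℝ), Real.exp (s - l * Real.exp s) * s ^ (α - 1) := by
    intro l
    rw [← integral_const_mul]
    exact setIntegral_congr_fun measurableSet_Ioi (fun s _ => by rw [hf]; ring)
  constructor
  · have := hprod.integral_prod_right
    exact this.congr (Filter.Eventually.of_forall (fun l => hIl l))
  · rw [show (∫ l in Ioi (0:ℝ), l ^ n *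
        ∫ s in Ioi (0:ℝ), Real.exp (s - l * Real.exp s) * s ^ (α - 1))
        = ∫ l in Ioi (0:ℝ), ∫ s in Ioi (0:ℝ), f s l from
      setIntegral_congr_fun measurableSet_Ioi (fun l _ => (hIl l).symm)]
    rw [← hswap]
    rw [show (∫ s in Ioi (0:ℝ), ∫ l in Ioi (0:ℝ), f s l)
        = ∫ s in Ioi (0:ℝ), (n ! : ℝ) * (s ^ (α - 1) * Real.exp (-((n : ℝ) * s))) from
      setIntegral_congr_fun measurableSet_Ioi (fun s _ => hval_l s)]
    rw [integral_const_mul]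
    rw [Real.integral_rpow_mul_exp_neg_mul_Ioi (by linarith : (0:ℝ) < α) hnpos]
    rw [one_div, Real.inv_rpow (le_of_lt hnpos), ← Real.rpow_neg (le_of_lt hnpos)]
    ring

/-- **Theorem 2(a) (PGF form).** The PGF of the zero-truncated Poisson distribution,
mixed with the density f(λ; α) = (e^λ - 1) (∫₀^∞ e^(s - λ e^s) s^(α-1) ds) / (Γ(α) ζ(α)),
equals the PGF of the Zipf(α) distribution. -/
theorem zipf_is_mztp_pgf (α : ℝ) (hα : 1 < α) (z : ℝ) (hz : |z| < 1) :
    ∫ l in Ioi (0 : ℝ),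
        ((Real.exp (l * z) - 1) / (Real.exp l - 1)) *
          ((Real.exp l - 1) *
              (∫ s in Ioi (0 : ℝ), Real.exp (s - l * Real.exp s) * s ^ (α - 1)) /
            (Real.Gamma α * (∑' n : ℕ+, (n : ℝ) ^ (-α))))
      = (1 / (∑' n : ℕ+, (n : ℝ) ^ (-α))) * ∑' x : ℕ+, z ^ (x : ℕ) * (x : ℝ) ^ (-α) := by
  have hΓ : 0 < Real.Gamma α := Real.Gamma_pos_of_pos (by linarith)
  have hsum : Summable (fun n : ℕ+ => (n : ℝ) ^ (-α)) := by
    have h1 : Summable (fun n : ℕ => (n : ℝ) ^ (-α)) :=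
      Real.summable_nat_rpow.mpr (by linarith)
    exact h1.comp_injective (fun a b h => PNat.coe_injective h)
  have hζ : 0 < ∑' n : ℕ+, (n : ℝ) ^ (-α) := by
    refine Summable.tsum_pos hsum (fun n => Real.rpow_nonneg (by positivity) _) 1 ?_
    exact Real.rpow_pos_of_pos (by norm_num) _
  set S := ∑' n : ℕ+, (n : ℝ) ^ (-α) with hS
  set C := Real.Gamma α * S with hC
  have hCpos : 0 < C := mul_pos hΓ hζ
  set g : ℕ+ → ℝ → ℝ := fun x l => (z ^ (x:ℕ) / ((x:ℕ)! : ℝ) / C) *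
    (l ^ (x:ℕ) * ∫ s in Ioi (0:ℝ), Real.exp (s - l * Real.exp s) * s ^ (α - 1)) with hg
  have hInonneg : ∀ l : ℝ,
      0 ≤ ∫ s in Ioi (0:ℝ), Real.exp (s - l * Real.exp s) * s ^ (α - 1) := by
    intro l
    refine setIntegral_nonneg measurableSet_Ioi (fun s hs => ?_)
    have : (0:ℝ) ≤ s := le_of_lt hs
    positivity
  -- step 1: pointwise expansion into a series
  have hstep1 : ∀ l ∈ Ioi (0:ℝ),
      ((Real.exp (l * z) - 1) / (Real.exp l - 1)) *
        ((Real.exp l - 1) *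
            (∫ s in Ioi (0:ℝ), Real.exp (s - l * Real.exp s) * s ^ (α - 1)) / C)
      = ∑' x : ℕ+, g x l := by
    intro l hl
    set I := ∫ s in Ioi (0:ℝ), Real.exp (s - l * Real.exp s) * s ^ (α - 1) with hI
    have h1 : (1:ℝ) < Real.exp l := by
      have := Real.exp_lt_exp.mpr (show (0:ℝ) < l from hl)
      rwa [Real.exp_zero] at this
    have hel : Real.exp l - 1 ≠ 0 := ne_of_gt (by linarith)
    have h0 : HasSum (fun m : ℕ => (l*z)^m / m !) (Real.exp (l*z)) := by
      rw [Real.exp_eq_exp_ℝ]; exact NormedSpace.expSeries_div_hasSum_exp (l*z)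
    have h1s : HasSum (fun m : ℕ => (l*z)^(m+1)/(m+1)!) (Real.exp (l*z) - 1) := by
      have := (hasSum_nat_add_iff' (f := fun m : ℕ => (l*z)^m/m !) 1).mpr h0
      simpa using this
    have h2 : HasSum (fun x : ℕ+ => (l*z)^(x:ℕ)/(((x:ℕ)!:ℝ))) (Real.exp (l*z) - 1) := by
      have he := (Equiv.pnatEquivNat.hasSum_iff
        (f := fun m : ℕ => (l*z)^(m+1)/((m+1)! : ℝ))).mpr h1s
      have hfn : (fun x : ℕ+ => (l*z)^(x:ℕ)/(((x:ℕ)!:ℝ)))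
          = ((fun m : ℕ => (l*z)^(m+1)/((m+1)! : ℝ)) ∘ Equiv.pnatEquivNat) := by
        funext x
        simp only [Function.comp_apply, Equiv.pnatEquivNat_apply]
        rw [PNat.natPred_add_one]
      rw [hfn]
      exact he
    have h3 := h2.mul_right (I / C)
    have h4 : HasSum (fun x : ℕ+ => g x l) ((Real.exp (l*z) - 1) * (I / C)) := by
      have hfn : (fun x : ℕ+ => g x l)
          = fun x : ℕ+ => (l*z)^(x:ℕ)/(((x:ℕ)!:ℝ)) * (I / C) := by
        funext x
        rw [hg]
        simp only
        rw [← hI]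
        ring
      rw [hfn]
      exact h3
    rw [h4.tsum_eq, hI]
    field_simp
  rw [setIntegral_congr_fun measurableSet_Ioi hstep1]
  -- step 2: swap integral and sum
  have hint : ∀ x : ℕ+, Integrable (g x) (volume.restrict (Ioi 0)) := by
    intro x
    exact ((key_fubini α hα (x:ℕ) x.pos).1).const_mul _
  have hval : ∀ x : ℕ+, (∫ l in Ioi (0:ℝ), g x l)
      = (1 / S) * (z ^ (x:ℕ) * ((x:ℕ):ℝ) ^ (-α)) := by
    intro x
    rw [hg]
    simp only
    rw [integral_const_mul, (key_fubini α hα (x:ℕ) x.pos).2, hC]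
    have hx : (((x:ℕ)! : ℝ)) ≠ 0 := by
      exact_mod_cast (Nat.factorial_ne_zero (x:ℕ))
    field_simp
  have hnormval : ∀ x : ℕ+, (∫ l in Ioi (0:ℝ), ‖g x l‖)
      = (Real.Gamma α / C) * (|z| ^ (x:ℕ) * ((x:ℕ):ℝ) ^ (-α)) := by
    intro x
    have heq : ∀ l ∈ Ioi (0:ℝ), ‖g x l‖ = (|z| ^ (x:ℕ) / ((x:ℕ)! : ℝ) / C) *
        (l ^ (x:ℕ) * ∫ s in Ioi (0:ℝ), Real.exp (s - l * Real.exp s) * s ^ (α - 1)) := by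
      intro l hl
      rw [hg]
      simp only
      rw [Real.norm_eq_abs, abs_mul, abs_div, abs_div, abs_pow, abs_of_pos hCpos,
        Nat.abs_cast, abs_of_nonneg
          (mul_nonneg (pow_nonneg (le_of_lt hl) _) (hInonneg l))]
    rw [setIntegral_congr_fun measurableSet_Ioi heq, integral_const_mul,
      (key_fubini α hα (x:ℕ) x.pos).2]
    have hx : (((x:ℕ)! : ℝ)) ≠ 0 := by
      exact_mod_cast (Nat.factorial_ne_zero (x:ℕ))
    field_simp
  have hnorm : Summable (fun x : ℕ+ => ∫ l in Ioi (0:ℝ), ‖g x l‖) := by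
    rw [summable_congr hnormval]
    apply Summable.mul_left
    have hgeo : Summable (fun x : ℕ+ => |z| ^ (x:ℕ)) :=
      (summable_geometric_of_lt_one (abs_nonneg z) hz).comp_injective PNat.coe_injective
    refine Summable.of_nonneg_of_le (fun x => ?_) (fun x => ?_) hgeo
    · have : (0:ℝ) < ((x:ℕ):ℝ) := by exact_mod_cast x.pos
      positivity
    · have hx1 : (1:ℝ) ≤ ((x:ℕ):ℝ) := by exact_mod_cast x.one_le
      calc |z| ^ (x:ℕ) * ((x:ℕ):ℝ) ^ (-α)
          ≤ |z| ^ (x:ℕ) * 1 := by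
            refine mul_le_mul_of_nonneg_left ?_ (by positivity)
            exact Real.rpow_le_one_of_one_le_of_nonpos hx1 (by linarith)
        _ = |z| ^ (x:ℕ) := mul_one _
  rw [← integral_tsum_of_summable_integral_norm hint hnorm]
  rw [tsum_congr hval, tsum_mul_left]
end

section
/- Let α > 1 be real. There is no Borel probability measure μ on [0, ∞) with ∫ e^{-λ} dμ(λ) < 1 such that for every positive integer x one has x^{-α}/ζ(α) = (∫ e^{-λ}·λ^x/x! dμ(λ)) / (1 − ∫ e^{-λ} dμ(λ)). (Theorem 2(b): the Zipf(α) distribution is not the zero-truncation of any mixed Poisson distribution.) -/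
open MeasureTheory Real Set

lemma exp_tsum' (x : ℝ) : Real.exp x = ∑' n : ℕ, x ^ n / n.factorial := by
  rw [Real.exp_eq_exp_ℝ, NormedSpace.exp_eq_tsum_div]

lemma pow_div_factorial_le_exp' {x : ℝ} (hx : 0 ≤ x) (k : ℕ) :
    x ^ k / k.factorial ≤ Real.exp x := by
  rw [exp_tsum' x]
  exact Summable.le_tsum (Real.summable_pow_div_factorial x) k (fun i _ => by positivity)

lemma pow_mul_exp_neg_le' (k : ℕ) {β x : ℝ} (hβ : 0 < β) (hx : 0 ≤ x) :
    x ^ k * Real.exp (-(β * x)) ≤ k.factorial / β ^ k := by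
  have h : (β * x) ^ k ≤ (k.factorial : ℝ) * Real.exp (β * x) := by
    have := pow_div_factorial_le_exp' (by positivity : (0:ℝ) ≤ β * x) k
    rw [div_le_iff₀ (by positivity)] at this
    linarith [this]
  rw [le_div_iff₀ (by positivity)]
  have h2 : x ^ k * Real.exp (-(β * x)) * β ^ k = (β * x) ^ k * Real.exp (-(β * x)) := by
    rw [mul_pow]; ring
  rw [h2]
  calc (β * x) ^ k * Real.exp (-(β * x))
      ≤ ((k.factorial : ℝ) * Real.exp (β * x)) * Real.exp (-(β * x)) :=
        mul_le_mul_of_nonneg_right h (Real.exp_pos _).le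
    _ = k.factorial := by rw [mul_assoc, ← Real.exp_add]; simp

noncomputable def LW {Ω : Type*} [MeasurableSpace Ω] (ρ : Measure Ω) (W U : Ω → ℝ)
    (x : ℕ) (t : ℝ) : ℝ :=
  ∫ ω, W ω * U ω ^ x * Real.exp (-(t * U ω)) ∂ρ

lemma lw_step {Ω : Type*} [MeasurableSpace Ω] (ρ : Measure Ω) (W U : Ω → ℝ)
    (hpos : ∀ᵐ ω ∂ρ, 0 ≤ W ω ∧ 0 ≤ U ω)
    (hInt : ∀ (x : ℕ) (σ : ℝ), -(1/2 : ℝ) ≤ σ →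
      Integrable (fun ω => W ω * U ω ^ x * Real.exp (-(σ * U ω))) ρ)
    (x : ℕ) (τ : ℝ) (hτ : 0 ≤ τ) :
    LW ρ W U x (τ + 1/2) = ∑' y : ℕ, ((-(1/2 : ℝ)) ^ y / y.factorial) * LW ρ W U (x + y) τ := by
  set f : ℕ → Ω → ℝ := fun y ω =>
    ((-(1/2 : ℝ)) ^ y / y.factorial) * (W ω * U ω ^ (x + y) * Real.exp (-(τ * U ω))) with hf
  have hmeas : ∀ y, AEStronglyMeasurable (f y) ρ := fun y =>
    ((hInt (x + y) τ (by linarith)).aestronglyMeasurable.const_mul _)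
  have hterm : ∀ ω y, f y ω
      = (W ω * U ω ^ x * Real.exp (-(τ * U ω))) * ((-(1/2 * U ω)) ^ y / y.factorial) := by
    intro ω y
    have h1 : (-(1/2 * U ω)) ^ y = (-(1/2 : ℝ)) ^ y * U ω ^ y := by
      rw [← mul_pow]; ring_nf
    simp only [hf, h1, pow_add]
    ring
  have hptw : ∀ ω, W ω * U ω ^ x * Real.exp (-((τ + 1/2) * U ω)) = ∑' y, f y ω := by
    intro ω
    rw [tsum_congr (hterm ω), tsum_mul_left, ← exp_tsum',
      mul_assoc (W ω * U ω ^ x) (Real.exp (-(τ * U ω))), ← Real.exp_add]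
    congr 2
    ring
  have key : ∫ ω, ∑' y, f y ω ∂ρ = ∑' y, ∫ ω, f y ω ∂ρ := by
    refine integral_tsum hmeas ?_
    rw [← lintegral_tsum (fun y => (hmeas y).enorm)]
    have hb : ∫⁻ ω, ∑' y, ‖f y ω‖ₑ ∂ρ
        = ∫⁻ ω, ‖W ω * U ω ^ x * Real.exp (-((τ - 1/2) * U ω))‖ₑ ∂ρ := by
      refine lintegral_congr_ae ?_
      filter_upwards [hpos] with ω hω
      obtain ⟨hW, hU⟩ := hω
      have h1 : ∀ y : ℕ, ‖f y ω‖ₑ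
          = ENNReal.ofReal ((W ω * U ω ^ x * Real.exp (-(τ * U ω))) * ((1/2 * U ω) ^ y / y.factorial)) := by
        intro y
        rw [hterm ω y, Real.enorm_eq_ofReal_abs]
        congr 1
        rw [abs_mul, abs_div, abs_pow, abs_neg, abs_of_nonneg (by positivity : (0:ℝ) ≤ 1/2 * U ω),
          abs_of_nonneg (by positivity), abs_of_nonneg (by positivity : (0:ℝ) ≤ (y.factorial : ℝ))]
      rw [tsum_congr h1]
      have hsum : Summable (fun y : ℕ => (W ω * U ω ^ x * Real.exp (-(τ * U ω))) * ((1/2 * U ω) ^ y / y.factorial)) :=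
        (Real.summable_pow_div_factorial (1/2 * U ω)).mul_left _
      rw [← ENNReal.ofReal_tsum_of_nonneg (fun y => by positivity) hsum]
      rw [tsum_mul_left, ← exp_tsum', ← Real.enorm_eq_ofReal (by positivity)]
      congr 1
      rw [mul_assoc, ← Real.exp_add]
      ring_nf
    rw [hb]
    exact (hInt x (τ - 1/2) (by linarith)).2.ne
  calc LW ρ W U x (τ + 1/2) = ∫ ω, ∑' y, f y ω ∂ρ := by
        unfold LW; exact integral_congr_ae (Filter.Eventually.of_forall hptw)
    _ = ∑' y, ∫ ω, f y ω ∂ρ := key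
    _ = ∑' y : ℕ, ((-(1/2 : ℝ)) ^ y / y.factorial) * LW ρ W U (x + y) τ := by
        refine tsum_congr fun y => ?_
        unfold LW
        rw [integral_const_mul]

lemma lw_eq {Ω₁ Ω₂ : Type*} [MeasurableSpace Ω₁] [MeasurableSpace Ω₂]
    (ρ₁ : Measure Ω₁) (ρ₂ : Measure Ω₂) (W₁ U₁ : Ω₁ → ℝ) (W₂ U₂ : Ω₂ → ℝ)
    (hpos₁ : ∀ᵐ ω ∂ρ₁, 0 ≤ W₁ ω ∧ 0 ≤ U₁ ω)
    (hInt₁ : ∀ (x : ℕ) (σ : ℝ), -(1/2 : ℝ) ≤ σ →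
      Integrable (fun ω => W₁ ω * U₁ ω ^ x * Real.exp (-(σ * U₁ ω))) ρ₁)
    (hpos₂ : ∀ᵐ ω ∂ρ₂, 0 ≤ W₂ ω ∧ 0 ≤ U₂ ω)
    (hInt₂ : ∀ (x : ℕ) (σ : ℝ), -(1/2 : ℝ) ≤ σ →
      Integrable (fun ω => W₂ ω * U₂ ω ^ x * Real.exp (-(σ * U₂ ω))) ρ₂)
    (hmom : ∀ x : ℕ, LW ρ₁ W₁ U₁ x 0 = LW ρ₂ W₂ U₂ x 0) :
    ∀ (n : ℕ) (x : ℕ), LW ρ₁ W₁ U₁ x ((n : ℝ)/2) = LW ρ₂ W₂ U₂ x ((n : ℝ)/2) := by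
  intro n
  induction n with
  | zero => simpa using hmom
  | succ n ih =>
    intro x
    have hcast : ((n + 1 : ℕ) : ℝ)/2 = (n : ℝ)/2 + 1/2 := by push_cast; ring
    rw [hcast, lw_step ρ₁ W₁ U₁ hpos₁ hInt₁ x _ (by positivity),
      lw_step ρ₂ W₂ U₂ hpos₂ hInt₂ x _ (by positivity)]
    exact tsum_congr fun y => by rw [ih (x + y)]

lemma int_aux {s b : ℝ} (hs : -1 < s) (hb : 0 < b) :
    IntegrableOn (fun x : ℝ => x ^ s * Real.exp (-(b * x))) (Ioi 0) := by
  have h := integrableOn_rpow_mul_exp_neg_mul_rpow hs zero_lt_one hb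
  refine h.congr_fun (fun x hx => ?_) measurableSet_Ioi
  dsimp only
  rw [Real.rpow_one, neg_mul]

lemma int_aux_nat (k : ℕ) {b : ℝ} (hb : 0 < b) :
    IntegrableOn (fun x : ℝ => x ^ k * Real.exp (-(b * x))) (Ioi 0) := by
  have h := int_aux (s := (k : ℝ)) (by have : (0:ℝ) ≤ (k:ℝ) := Nat.cast_nonneg k; linarith) hb
  refine h.congr_fun (fun x hx => ?_) measurableSet_Ioi
  dsimp only
  rw [Real.rpow_natCast]

lemma gamma_val {a b : ℝ} (ha : 0 < a) (hb : 0 < b) :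
    ∫ x in Ioi (0:ℝ), x ^ (a - 1) * Real.exp (-(b * x)) = Real.Gamma a / b ^ a := by
  rw [Real.integral_rpow_mul_exp_neg_mul_Ioi ha hb, one_div, Real.inv_rpow hb.le,
    inv_mul_eq_div]


set_option maxHeartbeats 1000000

/-- **Theorem 2(b).** The Zipf(α) distribution is not the zero-truncation of any
mixed Poisson distribution: there is no Borel probability measure μ on [0, ∞) with
∫ e^(-λ) dμ(λ) < 1 such that x^(-α)/ζ(α) = (∫ e^(-λ) λ^x / x! dμ(λ)) / (1 - ∫ e^(-λ) dμ(λ))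
for every positive integer x. -/
theorem zipf_is_not_ztmp (α : ℝ) (hα : 1 < α) :
    ¬ ∃ μ : Measure ℝ, IsProbabilityMeasure μ ∧ μ {l : ℝ | l < 0} = 0 ∧
        (∫ l, Real.exp (-l) ∂μ) < 1 ∧
        ∀ x : ℕ, 0 < x →
          (x : ℝ) ^ (-α) / (∑' n : ℕ+, (n : ℝ) ^ (-α))
            = (∫ l, Real.exp (-l) * l ^ (x : ℕ) / (Nat.factorial x) ∂μ) /
                (1 - ∫ l, Real.exp (-l) ∂μ) := by
  rintro ⟨μ, hprob, hneg, hm0lt, hpmf⟩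
  haveI := hprob
  have haepos : ∀ᵐ l ∂μ, 0 ≤ l := by
    rw [ae_iff]
    convert hneg using 2
    ext l; simp [not_le]
  set m0 := ∫ l, Real.exp (-l) ∂μ with hm0def
  set Z := ∑' n : ℕ+, (n : ℝ) ^ (-α) with hZdef
  have hsumN : Summable (fun n : ℕ => (n : ℝ) ^ (-α)) := by
    rw [Real.summable_nat_rpow]; linarith
  have hsum : Summable (fun n : ℕ+ => ((n : ℕ+) : ℝ) ^ (-α)) := by
    have := hsumN.comp_injective PNat.coe_injective
    exact this
  have hZpos : 0 < Z := by
    rw [hZdef]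
    refine Summable.tsum_pos hsum (fun n => Real.rpow_nonneg (by positivity) _) 1 ?_
    norm_num
  have h1m0 : (0:ℝ) < 1 - m0 := by linarith
  set c := (1 - m0)/Z with hcdef
  have hcpos : 0 < c := div_pos h1m0 hZpos
  have hmoment : ∀ x : ℕ, ∫ l, Real.exp (-l) * l ^ (x+1) ∂μ
      = c * (x+1).factorial * (((x+1 : ℕ) : ℝ)) ^ (-α) := by
    intro x
    have h := hpmf (x+1) x.succ_pos
    rw [integral_div] at h
    have hZ0 : Z ≠ 0 := ne_of_gt hZpos
    have h10 : (1:ℝ) - m0 ≠ 0 := ne_of_gt h1m0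
    have hfac : (((x+1).factorial : ℝ)) ≠ 0 := by positivity
    rw [hcdef]
    field_simp at h ⊢
    linarith [h]
  have hGpos : 0 < Real.Gamma α := Real.Gamma_pos_of_pos (by linarith)
  set κ := c / Real.Gamma α with hkdef
  have hκpos : 0 < κ := div_pos hcpos hGpos
  set W₁ : ℝ → ℝ := fun l => l * Real.exp (-l) with hW₁
  set U₁ : ℝ → ℝ := fun l => l with hU₁
  set ρ₂ : Measure (ℝ × ℝ) := (volume.restrict (Ioi (0:ℝ))).prod (volume.restrict (Ioi (0:ℝ)))
    with hρ₂
  set W₂ : ℝ × ℝ → ℝ :=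
    fun p => κ * ((p.1 * Real.exp (-p.2)) * (Real.exp (-p.1) * p.2 ^ (α-1))) with hW₂
  set U₂ : ℝ × ℝ → ℝ := fun p => p.1 * Real.exp (-p.2) with hU₂
  have hpos₁ : ∀ᵐ l ∂μ, 0 ≤ W₁ l ∧ 0 ≤ U₁ l := by
    filter_upwards [haepos] with l hl
    exact ⟨mul_nonneg hl (Real.exp_pos _).le, hl⟩
  have hInt₁ : ∀ (x : ℕ) (σ : ℝ), -(1/2 : ℝ) ≤ σ →
      Integrable (fun l => W₁ l * U₁ l ^ x * Real.exp (-(σ * U₁ l))) μ := by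
    intro x σ hσ
    have hb2 : (0:ℝ) < 1 + σ := by linarith
    refine (integrable_const (((x+1).factorial : ℝ) / (1/2 : ℝ) ^ (x+1))).mono' ?_ ?_
    · have hc1 : Continuous fun l : ℝ => l * Real.exp (-l) := by fun_prop
      have hc2 : Continuous fun l : ℝ => Real.exp (-(σ * l)) := by fun_prop
      exact ((hc1.mul (continuous_pow x)).mul hc2).aestronglyMeasurable
    · filter_upwards [haepos] with l hl
      rw [Real.norm_eq_abs, abs_of_nonneg (by
        simp only [hW₁, hU₁]
        exact mul_nonneg (mul_nonneg (mul_nonneg hl (Real.exp_pos _).le) (pow_nonneg hl x))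
          (Real.exp_pos _).le)]
      have hEE : Real.exp (-l) * Real.exp (-(σ * l)) = Real.exp (-((1+σ) * l)) := by
        rw [← Real.exp_add]; congr 1; ring
      have h2 : W₁ l * U₁ l ^ x * Real.exp (-(σ * U₁ l))
          = l ^ (x+1) * (Real.exp (-l) * Real.exp (-(σ * l))) := by
        simp only [hW₁, hU₁]; rw [pow_succ]; ring
      rw [h2, hEE]
      calc l ^ (x+1) * Real.exp (-((1+σ) * l)) ≤ ((x+1).factorial : ℝ) / (1+σ) ^ (x+1) :=
            pow_mul_exp_neg_le' (x+1) hb2 hl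
        _ ≤ ((x+1).factorial : ℝ) / (1/2 : ℝ) ^ (x+1) := by
            gcongr
            linarith
  have hbox : ∀ᵐ p ∂ρ₂, p ∈ (Ioi (0:ℝ)) ×ˢ (Ioi (0:ℝ)) := by
    rw [hρ₂, Measure.prod_restrict]
    exact ae_restrict_mem (measurableSet_Ioi.prod measurableSet_Ioi)
  have hpos₂ : ∀ᵐ p ∂ρ₂, 0 ≤ W₂ p ∧ 0 ≤ U₂ p := by
    filter_upwards [hbox] with p hp
    have h1 : (0:ℝ) < p.1 := hp.1
    have h2 : (0:ℝ) < p.2 := hp.2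
    have hr : (0:ℝ) ≤ p.2 ^ (α-1) := Real.rpow_nonneg h2.le _
    have hu : (0:ℝ) ≤ p.1 * Real.exp (-p.2) := mul_nonneg h1.le (Real.exp_pos _).le
    exact ⟨mul_nonneg hκpos.le (mul_nonneg hu (mul_nonneg (Real.exp_pos _).le hr)), hu⟩
  have hmeasW : ∀ (x : ℕ) (σ : ℝ),
      AEStronglyMeasurable (fun p => W₂ p * U₂ p ^ x * Real.exp (-(σ * U₂ p))) ρ₂ := by
    intro x σ
    have : Measurable fun p : ℝ × ℝ => W₂ p * U₂ p ^ x * Real.exp (-(σ * U₂ p)) := by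
      simp only [hW₂, hU₂]
      fun_prop
    exact this.aestronglyMeasurable
  have hInt₂ : ∀ (x : ℕ) (σ : ℝ), -(1/2 : ℝ) ≤ σ →
      Integrable (fun p => W₂ p * U₂ p ^ x * Real.exp (-(σ * U₂ p))) ρ₂ := by
    intro x σ hσ
    have hF1 : IntegrableOn (fun v : ℝ => κ * (v ^ (x+1) * Real.exp (-(1/2 * v)))) (Ioi 0) :=
      (int_aux_nat (x+1) (by norm_num : (0:ℝ) < 1/2)).const_mul κ
    have hF2 : IntegrableOn (fun r : ℝ => r ^ (α-1) * Real.exp (-r)) (Ioi 0) := by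
      refine (int_aux (by linarith : (-1:ℝ) < α - 1) one_pos).congr_fun (fun r hr => ?_)
        measurableSet_Ioi
      dsimp only
      rw [one_mul]
    have hprodInt : Integrable
        (fun p : ℝ × ℝ => (κ * (p.1 ^ (x+1) * Real.exp (-(1/2 * p.1))))
          * (p.2 ^ (α-1) * Real.exp (-p.2))) ρ₂ := by
      rw [hρ₂]
      exact hF1.mul_prod hF2
    refine hprodInt.mono' (hmeasW x σ) ?_
    filter_upwards [hbox] with p hp
    have h1 : (0:ℝ) < p.1 := hp.1
    have h2 : (0:ℝ) < p.2 := hp.2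
    have hr : (0:ℝ) ≤ p.2 ^ (α-1) := Real.rpow_nonneg h2.le _
    have hB1 : Real.exp (-p.2) ≤ 1 := Real.exp_le_one_iff.mpr (by linarith)
    have hu : (0:ℝ) ≤ p.1 * Real.exp (-p.2) := mul_nonneg h1.le (Real.exp_pos _).le
    have hu2 : p.1 * Real.exp (-p.2) ≤ p.1 := by nlinarith [Real.exp_pos (-p.2)]
    have hWnn : (0:ℝ) ≤ W₂ p :=
      mul_nonneg hκpos.le (mul_nonneg hu (mul_nonneg (Real.exp_pos _).le hr))
    rw [Real.norm_eq_abs, abs_of_nonneg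
      (mul_nonneg (mul_nonneg hWnn (pow_nonneg hu x)) (Real.exp_pos _).le)]
    have hstep1 : Real.exp (-(σ * U₂ p)) ≤ Real.exp (1/2 * p.1) := by
      apply Real.exp_le_exp.2
      have k1 : -(1/2:ℝ) * (p.1 * Real.exp (-p.2)) ≤ σ * (p.1 * Real.exp (-p.2)) :=
        mul_le_mul_of_nonneg_right hσ hu
      simp only [hU₂]
      nlinarith [hu2]
    have hstep2 : U₂ p ^ x ≤ p.1 ^ x := pow_le_pow_left₀ hu hu2 x
    have hEE : Real.exp (-p.1) * Real.exp (1/2 * p.1) = Real.exp (-(1/2 * p.1)) := by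
      rw [← Real.exp_add]; congr 1; ring
    calc W₂ p * U₂ p ^ x * Real.exp (-(σ * U₂ p))
        ≤ W₂ p * p.1 ^ x * Real.exp (1/2 * p.1) :=
          mul_le_mul (mul_le_mul_of_nonneg_left hstep2 hWnn) hstep1 (Real.exp_pos _).le
            (mul_nonneg hWnn (pow_nonneg h1.le x))
      _ = (κ * (p.1 ^ (x+1) * Real.exp (-(1/2 * p.1)))) * (p.2 ^ (α-1) * Real.exp (-p.2)) := by
          simp only [hW₂]
          rw [← hEE]; ring
  have hmom : ∀ x : ℕ, LW μ W₁ U₁ x 0 = LW ρ₂ W₂ U₂ x 0 := by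
    intro x
    have h1 : LW μ W₁ U₁ x 0 = ∫ l, Real.exp (-l) * l ^ (x+1) ∂μ := by
      unfold LW
      refine integral_congr_ae (Filter.Eventually.of_forall fun l => ?_)
      simp only [hW₁, hU₁]
      rw [zero_mul, neg_zero, Real.exp_zero, mul_one, pow_succ]
      ring
    have h2 : LW ρ₂ W₂ U₂ x 0
        = (∫ v in Ioi (0:ℝ), κ * (v ^ (x+1) * Real.exp (-v)))
          * (∫ r in Ioi (0:ℝ), r ^ (α-1) * (Real.exp (-r) * Real.exp (-r) ^ x)) := by
      unfold LW
      rw [hρ₂, ← integral_prod_mul]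
      rw [← hρ₂]
      refine integral_congr_ae (Filter.Eventually.of_forall fun p => ?_)
      simp only [hW₂, hU₂]
      rw [zero_mul, neg_zero, Real.exp_zero, mul_one, mul_pow, pow_succ]
      ring
    have h3 : ∫ v in Ioi (0:ℝ), κ * (v ^ (x+1) * Real.exp (-v)) = κ * (x+1).factorial := by
      rw [integral_const_mul]
      have hg := gamma_val (a := (x:ℝ) + 2) (by positivity) one_pos
      have heq : ∀ v ∈ Ioi (0:ℝ), v ^ (((x:ℝ) + 2) - 1) * Real.exp (-(1 * v))
          = v ^ (x+1) * Real.exp (-v) := by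
        intro v hv
        rw [one_mul, show ((x:ℝ) + 2) - 1 = ((x+1 : ℕ) : ℝ) by push_cast; ring,
          Real.rpow_natCast]
      rw [setIntegral_congr_fun measurableSet_Ioi heq] at hg
      rw [hg, Real.one_rpow, div_one]
      congr 1
      have := Real.Gamma_nat_eq_factorial (x+1)
      rw [show ((x:ℝ) + 2) = ((x+1 : ℕ) : ℝ) + 1 by push_cast; ring, this]
    have h4 : ∫ r in Ioi (0:ℝ), r ^ (α-1) * (Real.exp (-r) * Real.exp (-r) ^ x)
        = Real.Gamma α / ((x:ℝ)+1) ^ α := by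
      have hg := gamma_val (a := α) (by linarith) (by positivity : (0:ℝ) < (x:ℝ)+1)
      rw [← hg]
      refine setIntegral_congr_fun measurableSet_Ioi fun r hr => ?_
      rw [← Real.exp_nat_mul, ← Real.exp_add]
      congr 2
      ring
    rw [h1, h2, h3, h4, hmoment x]
    have hxc : (((x+1 : ℕ)) : ℝ) = (x:ℝ) + 1 := by push_cast; ring
    rw [hxc, Real.rpow_neg (by positivity : (0:ℝ) ≤ (x:ℝ)+1), hkdef]
    field_simp
  clear_value κ c Z
  set M := max 1 ((Real.exp 5 / κ) ^ (α-1)⁻¹) + 1 with hMdef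
  have hM1 : 1 < M := by
    have := le_max_left 1 ((Real.exp 5 / κ) ^ (α-1)⁻¹)
    rw [hMdef]; linarith
  set n := ⌈2 * Real.exp M⌉₊ with hndef
  set tt := (n : ℝ)/2 with httdef
  have htt1 : Real.exp M ≤ tt := by
    have h := Nat.le_ceil (2 * Real.exp M)
    rw [httdef, hndef]; linarith
  have htt : 0 < tt := lt_of_lt_of_le (Real.exp_pos M) htt1
  have hlog : M ≤ Real.log tt := (Real.le_log_iff_exp_le htt).2 htt1
  have hlog1 : 1 ≤ Real.log tt := le_trans hM1.le hlog
  have heq : LW μ W₁ U₁ 0 tt = LW ρ₂ W₂ U₂ 0 tt := by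
    rw [httdef]
    exact lw_eq μ ρ₂ W₁ U₁ W₂ U₂ hpos₁ hInt₁ hpos₂ hInt₂ hmom n 0
  clear_value tt
  clear httdef hndef n
  have hlogbig : Real.exp 5 / κ < Real.log tt ^ (α-1) := by
    have hbase : (Real.exp 5 / κ) ^ (α-1)⁻¹ < M := by
      have := le_max_right 1 ((Real.exp 5 / κ) ^ (α-1)⁻¹)
      rw [hMdef]; linarith
    have h0 : (0:ℝ) ≤ Real.exp 5 / κ := by positivity
    calc Real.exp 5 / κ = ((Real.exp 5 / κ) ^ (α-1)⁻¹) ^ (α-1) := by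
          rw [← Real.rpow_mul h0, inv_mul_cancel₀ (by linarith : α - 1 ≠ 0), Real.rpow_one]
      _ < M ^ (α-1) := Real.rpow_lt_rpow (by positivity) hbase (by linarith)
      _ ≤ Real.log tt ^ (α-1) := Real.rpow_le_rpow (by linarith) hlog (by linarith)
  clear_value M
  have hup : LW μ W₁ U₁ 0 tt ≤ 1/tt := by
    have hb : ∀ᵐ l ∂μ, W₁ l * U₁ l ^ 0 * Real.exp (-(tt * U₁ l)) ≤ 1/tt := by
      filter_upwards [haepos] with l hl
      have e1 : l ^ 1 * Real.exp (-(tt * l)) ≤ (Nat.factorial 1 : ℝ) / tt ^ 1 :=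
        pow_mul_exp_neg_le' 1 htt hl
      have e2 : Real.exp (-l) ≤ 1 := Real.exp_le_one_iff.mpr (by linarith)
      simp only [hW₁, hU₁, pow_zero, mul_one]
      have e3 : l * Real.exp (-l) * Real.exp (-(tt * l))
          = (l ^ 1 * Real.exp (-(tt * l))) * Real.exp (-l) := by ring
      rw [e3]
      calc (l ^ 1 * Real.exp (-(tt * l))) * Real.exp (-l)
          ≤ ((Nat.factorial 1 : ℝ) / tt ^ 1) * 1 := by
            apply mul_le_mul e1 e2 (Real.exp_pos _).le (by positivity)
        _ = 1/tt := by norm_num [Nat.factorial]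
    have := integral_mono_ae (hInt₁ 0 tt (by linarith)) (integrable_const (1/tt)) hb
    unfold LW
    simpa [measure_univ] using this
  set box : Set (ℝ × ℝ) := (Ioo (1:ℝ) 2) ×ˢ (Ioo (Real.log tt) (Real.log tt + 1)) with hboxdef
  have hboxm : MeasurableSet box := measurableSet_Ioo.prod measurableSet_Ioo
  have hsub1 : Ioo (1:ℝ) 2 ⊆ Ioi 0 := fun y hy => lt_trans zero_lt_one hy.1
  have hsub2 : Ioo (Real.log tt) (Real.log tt + 1) ⊆ Ioi (0:ℝ) := fun y hy =>
    lt_of_lt_of_le (lt_of_lt_of_le zero_lt_one hlog1) hy.1.le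
  have hmass : ρ₂ box = 1 := by
    rw [hρ₂, hboxdef, Measure.prod_prod, Measure.restrict_apply measurableSet_Ioo,
      Measure.restrict_apply measurableSet_Ioo,
      inter_eq_self_of_subset_left hsub1, inter_eq_self_of_subset_left hsub2,
      Real.volume_Ioo, Real.volume_Ioo, add_sub_cancel_left]
    norm_num
  have hlow : κ * Real.exp (-5) * Real.log tt ^ (α-1) / tt ≤ LW ρ₂ W₂ U₂ 0 tt := by
    have hconst : ∀ p ∈ box,
        κ * Real.exp (-5) * Real.log tt ^ (α-1) / tt
          ≤ W₂ p * U₂ p ^ 0 * Real.exp (-(tt * U₂ p)) := by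
      rintro ⟨v, r⟩ ⟨⟨hv1, hv2⟩, ⟨hr1, hr2⟩⟩
      simp only [hW₂, hU₂, pow_zero, mul_one]
      have hlogpos : (0:ℝ) < Real.log tt := lt_of_lt_of_le zero_lt_one hlog1
      have eL : Real.exp (-(Real.log tt + 1)) = Real.exp (-1) / tt := by
        rw [show -(Real.log tt + 1) = (-Real.log tt) + (-1) by ring, Real.exp_add,
          Real.exp_neg (Real.log tt), Real.exp_log htt]
        ring
      have hB1 : Real.exp (-1) / tt ≤ Real.exp (-r) := by
        rw [← eL]; exact Real.exp_le_exp.2 (by linarith)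
      have hB2 : Real.exp (-r) ≤ 1 / tt := by
        rw [show (1:ℝ)/tt = Real.exp (-(Real.log tt)) by
          rw [Real.exp_neg (Real.log tt), Real.exp_log htt, one_div]]
        exact Real.exp_le_exp.2 (by linarith)
      have hA : Real.exp (-2) ≤ Real.exp (-v) := Real.exp_le_exp.2 (by linarith)
      have hrp : Real.log tt ^ (α-1) ≤ r ^ (α-1) :=
        Real.rpow_le_rpow hlogpos.le hr1.le (by linarith)
      have hT : Real.exp (-2) ≤ Real.exp (-(tt * (v * Real.exp (-r)))) := by
        apply Real.exp_le_exp.2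
        have : v * Real.exp (-r) ≤ 2 * (1/tt) := by
          apply mul_le_mul hv2.le hB2 (Real.exp_pos _).le (by norm_num)
        have h2t : tt * (v * Real.exp (-r)) ≤ 2 := by
          calc tt * (v * Real.exp (-r)) ≤ tt * (2 * (1/tt)) := by
                apply mul_le_mul_of_nonneg_left this htt.le
            _ = 2 := by field_simp
        linarith
      have e5 : Real.exp (-5) = Real.exp (-1) * Real.exp (-2) * Real.exp (-2) := by
        rw [← Real.exp_add, ← Real.exp_add]; norm_num
      calc κ * Real.exp (-5) * Real.log tt ^ (α-1) / tt
          = κ * ((1 * (Real.exp (-1) / tt)) * (Real.exp (-2) * Real.log tt ^ (α-1)))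
            * Real.exp (-2) := by rw [e5]; ring
        _ ≤ κ * ((v * Real.exp (-r)) * (Real.exp (-v) * r ^ (α-1)))
            * Real.exp (-(tt * (v * Real.exp (-r)))) := by
            have hBnn : (0:ℝ) ≤ κ * ((v * Real.exp (-r)) * (Real.exp (-v) * r ^ (α-1))) :=
              mul_nonneg hκpos.le (mul_nonneg
                (mul_nonneg (by linarith : (0:ℝ) ≤ v) (Real.exp_pos _).le)
                (mul_nonneg (Real.exp_pos _).le (Real.rpow_nonneg (by linarith) _)))
            have hin1 : (1:ℝ) * (Real.exp (-1) / tt) ≤ v * Real.exp (-r) :=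
              mul_le_mul hv1.le hB1 (by positivity) (by linarith)
            have hin2 : Real.exp (-2) * Real.log tt ^ (α-1) ≤ Real.exp (-v) * r ^ (α-1) :=
              mul_le_mul hA hrp (Real.rpow_nonneg hlogpos.le _) (Real.exp_pos _).le
            have hAB : κ * ((1 * (Real.exp (-1) / tt)) * (Real.exp (-2) * Real.log tt ^ (α-1)))
                ≤ κ * ((v * Real.exp (-r)) * (Real.exp (-v) * r ^ (α-1))) := by
              apply mul_le_mul_of_nonneg_left _ hκpos.le
              apply mul_le_mul hin1 hin2
                (mul_nonneg (Real.exp_pos _).le (Real.rpow_nonneg hlogpos.le _))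
                (mul_nonneg (by linarith : (0:ℝ) ≤ v) (Real.exp_pos _).le)
            exact mul_le_mul hAB hT (Real.exp_pos _).le hBnn
    have hge := setIntegral_ge_of_const_le_real (μ := ρ₂) hboxm (by rw [hmass]; exact ENNReal.one_ne_top)
      hconst ((hInt₂ 0 tt (by linarith)).integrableOn)
    rw [Measure.real, hmass] at hge
    simp only [ENNReal.toReal_one, mul_one] at hge
    have hle2 : ∫ p in box, W₂ p * U₂ p ^ 0 * Real.exp (-(tt * U₂ p)) ∂ρ₂
        ≤ LW ρ₂ W₂ U₂ 0 tt := by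
      unfold LW
      apply setIntegral_le_integral (hInt₂ 0 tt (by linarith))
      filter_upwards [hpos₂] with p hp
      exact mul_nonneg (mul_nonneg hp.1 (pow_nonneg hp.2 0)) (Real.exp_pos _).le
    linarith
  have hfinal : κ * Real.exp (-5) * Real.log tt ^ (α-1) / tt ≤ 1/tt := by
    calc κ * Real.exp (-5) * Real.log tt ^ (α-1) / tt ≤ LW ρ₂ W₂ U₂ 0 tt := hlow
      _ = LW μ W₁ U₁ 0 tt := (heq).symm
      _ ≤ 1/tt := hup
  have h1 : κ * Real.exp (-5) * Real.log tt ^ (α-1) ≤ 1 := by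
    rw [div_le_div_iff₀ htt htt] at hfinal
    have := le_of_mul_le_mul_right (by linarith : κ * Real.exp (-5) * Real.log tt ^ (α-1) * tt ≤ 1 * tt) htt
    linarith
  have h2 : (1:ℝ) < κ * Real.exp (-5) * Real.log tt ^ (α-1) := by
    have hk : κ * Real.exp (-5) * (Real.exp 5 / κ) = 1 := by
      rw [Real.exp_neg]
      field_simp
    calc (1:ℝ) = κ * Real.exp (-5) * (Real.exp 5 / κ) := hk.symm
      _ < κ * Real.exp (-5) * Real.log tt ^ (α-1) := by
          apply mul_lt_mul_of_pos_left hlogbig (by positivity)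
  linarith
end

section
/- Let α > 1 be real. The function F(z) = (z / (Γ(α)·ζ(α))) · ∫₀^∞ t^{α-1} / (e^t − z) dt, defined for real z < 0, tends to −∞ as z → −∞. (This is the key step showing the Zipf probability generating function, extended to the negative real axis via the Bose–Einstein integral, has no finite limit at −∞, so condition (d) characterizing zero-truncated mixed Poisson distributions fails.) -/
open MeasureTheory Real Set Filter

/-- The Zipf(α) probability generating function, extended to the negative real axis via
the Bose–Einstein integral as F(z) = (z / (Γ(α) ζ(α))) ∫₀^∞ t^(α-1) / (e^t - z) dt,
tends to -∞ as z → -∞. -/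
theorem zipf_pgf_tendsto_atBot (α : ℝ) (hα : 1 < α) :
    Tendsto
      (fun z : ℝ =>
        (z / (Real.Gamma α * (∑' n : ℕ+, (n : ℝ) ^ (-α)))) *
          ∫ t in Ioi (0 : ℝ), t ^ (α - 1) / (Real.exp t - z))
      atBot atBot := by
  have hα0 : (0:ℝ) < α := by linarith
  set C := Real.Gamma α * (∑' n : ℕ+, (n : ℝ) ^ (-α)) with hCdef
  have hsum : Summable (fun n : ℕ+ => (n : ℝ) ^ (-α)) := by
    have h1 : Summable (fun n : ℕ => (n:ℝ)^(-α)) := by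
      rw [Real.summable_nat_rpow]; linarith
    exact h1.subtype _
  have hC : 0 < C := by
    refine mul_pos (Real.Gamma_pos_of_pos hα0) ?_
    exact Summable.tsum_pos hsum (fun n => Real.rpow_nonneg (by positivity) _) 1
      (Real.rpow_pos_of_pos (by norm_num) _)
  have hmeas : ∀ z : ℝ, Measurable (fun t : ℝ => t ^ (α-1) / (Real.exp t - z)) := by
    intro z; fun_prop
  have hint : ∀ z : ℝ, z < 0 → IntegrableOn (fun t => t ^ (α-1) / (Real.exp t - z)) (Ioi 0) := by
    intro z hz
    refine Integrable.mono' (Real.GammaIntegral_convergent hα0)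
      ((hmeas z).aestronglyMeasurable) ?_
    filter_upwards [ae_restrict_mem measurableSet_Ioi] with t ht
    have h1 : (0:ℝ) < Real.exp t := Real.exp_pos t
    have h2 : (0:ℝ) < Real.exp t - z := by linarith
    have hnn : (0:ℝ) ≤ t ^ (α-1) := Real.rpow_nonneg (le_of_lt ht) _
    rw [Real.norm_eq_abs, abs_of_nonneg (by positivity)]
    calc t ^ (α-1) / (Real.exp t - z) ≤ t ^ (α-1) / Real.exp t :=
        div_le_div_of_nonneg_left hnn h1 (by linarith)
      _ = Real.exp (-t) * t ^ (α-1) := by rw [Real.exp_neg]; ring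
  have key : ∀ z : ℝ, z ≤ -Real.exp 1 →
      z * (∫ t in Ioi (0:ℝ), t ^ (α-1) / (Real.exp t - z)) ≤ -(Real.log (-z)) ^ α / (2*α) := by
    intro z hz
    have he1 : (0:ℝ) < Real.exp 1 := Real.exp_pos 1
    have hz0 : z < 0 := by linarith
    set L := Real.log (-z) with hLdef
    have hL1 : 1 ≤ L := by
      have : Real.exp 1 ≤ -z := by linarith
      calc (1:ℝ) = Real.log (Real.exp 1) := (Real.log_exp 1).symm
        _ ≤ L := Real.log_le_log he1 this
    have hL0 : (0:ℝ) ≤ L := by linarith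
    have hLz : Real.exp L = -z := Real.exp_log (by linarith)
    -- integrability on Ioc 0 L
    have hintIoc : IntegrableOn (fun t => t ^ (α-1) / (Real.exp t - z)) (Ioc 0 L) :=
      (hint z hz0).mono_set Ioc_subset_Ioi_self
    have hrint : IntegrableOn (fun t : ℝ => t ^ (α-1)) (Ioc 0 L) :=
      (intervalIntegral.intervalIntegrable_rpow' (by linarith : (-1:ℝ) < α - 1)).1
    -- step B: pointwise lower bound
    have hB : (∫ t in Ioc (0:ℝ) L, t ^ (α-1) / (-(2*z))) ≤
        ∫ t in Ioc (0:ℝ) L, t ^ (α-1) / (Real.exp t - z) := by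
      refine setIntegral_mono_on (hrint.div_const _) hintIoc measurableSet_Ioc ?_
      intro t ht
      have h1 : Real.exp t ≤ -z := by
        rw [← hLz]; exact Real.exp_le_exp.2 ht.2
      have h2 : (0:ℝ) < Real.exp t - z := by have := Real.exp_pos t; linarith
      exact div_le_div_of_nonneg_left (Real.rpow_nonneg (le_of_lt ht.1) _) h2 (by linarith)
    have hA : (∫ t in Ioc (0:ℝ) L, t ^ (α-1) / (Real.exp t - z)) ≤
        ∫ t in Ioi (0:ℝ), t ^ (α-1) / (Real.exp t - z) := by
      refine setIntegral_mono_set (hint z hz0) ?_ (HasSubset.Subset.eventuallyLE Ioc_subset_Ioi_self)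
      filter_upwards [ae_restrict_mem measurableSet_Ioi] with t ht
      have h2 : (0:ℝ) < Real.exp t - z := by have := Real.exp_pos t; linarith
      exact div_nonneg (Real.rpow_nonneg ht.le _) h2.le
    have hval : (∫ t in Ioc (0:ℝ) L, t ^ (α-1) / (-(2*z))) = (L ^ α / α) / (-(2*z)) := by
      rw [integral_div, ← intervalIntegral.integral_of_le hL0,
        integral_rpow (Or.inl (by linarith : (-1:ℝ) < α - 1))]
      rw [sub_add_cancel, Real.zero_rpow (by linarith : α ≠ 0), sub_zero]
    have hchain : (L ^ α / α) / (-(2*z)) ≤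
        ∫ t in Ioi (0:ℝ), t ^ (α-1) / (Real.exp t - z) := by
      rw [← hval]; exact le_trans hB hA
    have := mul_le_mul_of_nonpos_left hchain (le_of_lt hz0)
    refine le_trans this (le_of_eq ?_)
    have hzne : z ≠ 0 := ne_of_lt hz0
    have hαne : α ≠ 0 := by linarith
    field_simp
  have hb : Tendsto (fun z : ℝ => -(Real.log (-z)) ^ α / (2*α)) atBot atBot := by
    refine Tendsto.atBot_div_const (by positivity) ?_
    have h1 : Tendsto (fun z : ℝ => -z) atBot atTop := tendsto_neg_atBot_atTop
    have h2 : Tendsto Real.log atTop atTop := Real.tendsto_log_atTop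
    have h3 : Tendsto (fun x : ℝ => x ^ α) atTop atTop := tendsto_rpow_atTop hα0
    exact tendsto_neg_atTop_atBot.comp (h3.comp (h2.comp h1))
  have hmain : Tendsto (fun z : ℝ =>
      z * ∫ t in Ioi (0:ℝ), t ^ (α-1) / (Real.exp t - z)) atBot atBot := by
    refine tendsto_atBot_mono' atBot ?_ hb
    filter_upwards [eventually_le_atBot (-Real.exp 1)] with z hz
    exact key z hz
  have heq : (fun z : ℝ =>
      (z / C) * ∫ t in Ioi (0:ℝ), t ^ (α-1) / (Real.exp t - z)) = fun z : ℝ =>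
      (z * ∫ t in Ioi (0:ℝ), t ^ (α-1) / (Real.exp t - z)) / C := by
    funext z; ring
  rw [heq]
  exact hmain.atBot_div_const hC
end

section
/- Let s > 0 be real and let x be a positive integer. Then the geometric probability mass at x decomposes as a mixture of zero-truncated Poisson probability masses: e^{-s(x-1)}·(1 − e^{-s}) = ∫₀^∞ [e^{-λ}·λ^x / ((1 − e^{-λ})·x!)] · e^s·(e^s − 1)·e^{-λ e^s}·(e^λ − 1) dλ. -/
open MeasureTheory Real Set

/-- The geometric probability mass at x (in the parametrization s = -log(1-p))
decomposes as a mixture of zero-truncated Poisson probability masses with mixing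
density f*(λ; s) = e^s (e^s - 1) e^(-λ e^s) (e^λ - 1). -/
theorem geometric_is_mztp_pmf (s : ℝ) (hs : 0 < s) (x : ℕ) (hx : 0 < x) :
    Real.exp (-(s * ((x : ℝ) - 1))) * (1 - Real.exp (-s))
      = ∫ l in Ioi (0 : ℝ),
          (Real.exp (-l) * l ^ (x : ℕ) / ((1 - Real.exp (-l)) * (Nat.factorial x))) *
            (Real.exp s * (Real.exp s - 1) * Real.exp (-(l * Real.exp s)) *
              (Real.exp l - 1)) := by
  have hr : (0:ℝ) < Real.exp s := Real.exp_pos s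
  have key : ∫ l in Ioi (0:ℝ), l ^ (((x:ℝ)+1) - 1) * Real.exp (-(Real.exp s * l))
      = (1 / Real.exp s) ^ ((x:ℝ)+1) * Real.Gamma ((x:ℝ)+1) :=
    Real.integral_rpow_mul_exp_neg_mul_Ioi (by positivity) hr
  have hcongr : ∀ l ∈ Ioi (0:ℝ),
      (Real.exp (-l) * l ^ (x : ℕ) / ((1 - Real.exp (-l)) * (Nat.factorial x))) *
        (Real.exp s * (Real.exp s - 1) * Real.exp (-(l * Real.exp s)) * (Real.exp l - 1))
      = (Real.exp s * (Real.exp s - 1) / (Nat.factorial x)) *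
          (l ^ (((x:ℝ)+1) - 1) * Real.exp (-(Real.exp s * l))) := by
    intro l hl
    have hl0 : 0 < l := hl
    have h1 : Real.exp (-l) < 1 := by
      rw [Real.exp_lt_one_iff]; linarith
    have h3 : (Nat.factorial x : ℝ) ≠ 0 := by positivity
    have h5 : l ^ (((x:ℝ)+1) - 1) = l ^ (x:ℕ) := by
      rw [add_sub_cancel_right, Real.rpow_natCast]
    have h2 : (1 : ℝ) - (Real.exp l)⁻¹ ≠ 0 := by
      rw [← Real.exp_neg]; linarith
    have h6 : Real.exp l ≠ 0 := (Real.exp_pos l).ne'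
    have h2' : (1:ℝ) - Real.exp (-l) ≠ 0 := by linarith
    have h4 : Real.exp l - 1 = Real.exp l * (1 - Real.exp (-l)) := by
      rw [mul_sub, mul_one, ← Real.exp_add]; simp
    have h7 : Real.exp (-l) * Real.exp l = 1 := by rw [← Real.exp_add]; simp
    rw [h5, mul_comm l (Real.exp s), div_mul_eq_mul_div,
      div_eq_iff (mul_ne_zero h2' h3), h4]
    have h8 : (Nat.factorial x : ℝ)⁻¹ * (Nat.factorial x : ℝ) = 1 := inv_mul_cancel₀ h3
    linear_combination (l ^ x * Real.exp s * (Real.exp s - 1) *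
      Real.exp (-(Real.exp s * l)) * (1 - Real.exp (-l))) * h7 - (l ^ x * Real.exp s * (Real.exp s - 1) *
      Real.exp (-(Real.exp s * l)) * (1 - Real.exp (-l))) * h8
  rw [setIntegral_congr_fun measurableSet_Ioi hcongr, integral_const_mul, key,
    Real.Gamma_nat_eq_factorial, one_div, ← Real.exp_neg, ← Real.exp_mul]
  have h : Real.exp (-(s * ((x:ℝ) - 1))) * (1 - Real.exp (-s))
      = Real.exp s * (Real.exp s - 1) * Real.exp (-(s * ((x:ℝ) + 1))) := by
    simp only [mul_sub, sub_mul, mul_one, one_mul, ← Real.exp_add]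
    congr 1 <;> · congr 1; ring
  field_simp
  rw [h]
end

section
/- Let p ∈ (0, 1) and let z be real with |z| < 1. Then the probability generating function of the geometric distribution on {1,2,...} equals the integral of the zero-truncated Poisson probability generating function against the mixing density f(λ; p) = (p/(1−p)²)·e^{−λ/(1−p)}·(e^λ − 1): that is, p·z/(1 − (1−p)·z) = ∫₀^∞ ((e^{λz} − 1)/(e^λ − 1)) · (p/(1−p)²)·e^{−λ/(1−p)}·(e^λ − 1) dλ. -/
open MeasureTheory Real Set

lemma integral_exp_neg_mul_Ioi_zero {b : ℝ} (hb : 0 < b) :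
    ∫ x in Ioi (0 : ℝ), Real.exp (-(b * x)) = 1 / b := by
  have h := MeasureTheory.integral_comp_mul_left_Ioi (fun x => Real.exp (-x)) 0 hb
  rw [h, integral_exp_neg_Ioi]
  simp

/-- The PGF of the geometric distribution on {1,2,...} with parameter p equals the
integral of the zero-truncated Poisson PGF against the mixing density
f(λ; p) = (p/(1-p)²) e^(-λ/(1-p)) (e^λ - 1). -/
theorem geometric_pgf_is_mztp (p : ℝ) (hp0 : 0 < p) (hp1 : p < 1) (z : ℝ) (hz : |z| < 1) :
    p * z / (1 - (1 - p) * z)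
      = ∫ l in Ioi (0 : ℝ),
          ((Real.exp (l * z) - 1) / (Real.exp l - 1)) *
            ((p / (1 - p) ^ 2) * Real.exp (-(l / (1 - p))) * (Real.exp l - 1)) := by
  have h1p : (0 : ℝ) < 1 - p := by linarith
  set a : ℝ := 1 / (1 - p) with ha
  have ha1 : 1 < a := by
    rw [ha, lt_div_iff₀ h1p]; linarith
  have hz1 : z < 1 := lt_of_abs_lt hz
  have hz1' : -1 < z := neg_lt_of_abs_lt hz
  have haz : 0 < a - z := by linarith
  have ha0 : 0 < a := by linarith
  set c : ℝ := p / (1 - p) ^ 2 with hc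
  -- rewrite the integrand on Ioi 0
  have hcongr : ∫ l in Ioi (0 : ℝ),
          ((Real.exp (l * z) - 1) / (Real.exp l - 1)) *
            (c * Real.exp (-(l / (1 - p))) * (Real.exp l - 1))
      = ∫ l in Ioi (0 : ℝ),
          (c * Real.exp (-((a - z) * l)) - c * Real.exp (-(a * l))) := by
    refine setIntegral_congr_fun measurableSet_Ioi (fun l hl => ?_)
    have hl0 : (0 : ℝ) < l := hl
    have hne : Real.exp l - 1 ≠ 0 := by
      have : 1 < Real.exp l := by
        rw [show (1:ℝ) = Real.exp 0 by simp]; exact Real.exp_lt_exp.mpr hl0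
      linarith
    have hdiv : l / (1 - p) = a * l := by
      rw [ha]; field_simp
    rw [hdiv]
    have h1 : -((a - z) * l) = l * z + -(a * l) := by ring
    rw [h1, Real.exp_add]
    field_simp
  rw [hcongr]
  have hi1 : IntegrableOn (fun l : ℝ => c * Real.exp (-((a - z) * l))) (Ioi (0:ℝ)) := by
    simpa only [neg_mul, IntegrableOn] using (exp_neg_integrableOn_Ioi 0 haz).const_mul c
  have hi2 : IntegrableOn (fun l : ℝ => c * Real.exp (-(a * l))) (Ioi (0:ℝ)) := by
    simpa only [neg_mul, IntegrableOn] using (exp_neg_integrableOn_Ioi 0 ha0).const_mul c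
  rw [integral_sub hi1 hi2, integral_const_mul, integral_const_mul,
    integral_exp_neg_mul_Ioi_zero haz, integral_exp_neg_mul_Ioi_zero ha0]
  have hden : 1 - (1 - p) * z ≠ 0 := by nlinarith
  rw [hc, ha]
  field_simp
  have hden2 : 1 - z + z * p ≠ 0 := by contrapose! hden; linarith
  linear_combination (-1 : ℝ) * mul_inv_cancel₀ hden2
end

section
/- Let α > 1 be real. There exists a Borel probability measure μ on (0, 1) such that for every positive integer x one has x^{-α}/ζ(α) = ∫ p·(1−p)^{x-1} dμ(p). (Theorem 1, existence form: the Zipf(α) distribution is a mixture of geometric distributions on {1,2,3,...}.) -/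
open MeasureTheory Real Set

lemma lintA {a c : ℝ} (ha : 0 < a) (hc : 0 < c) :
    ∫⁻ t in Ioi (0:ℝ), ENNReal.ofReal (t ^ (a-1) * exp (-(c*t)))
      = ENNReal.ofReal ((1/c) ^ a * Real.Gamma a) := by
  rw [← MeasureTheory.ofReal_integral_eq_lintegral_ofReal, integral_rpow_mul_exp_neg_mul_Ioi ha hc]
  · have := integrableOn_rpow_mul_exp_neg_mul_rpow (p := 1) (s := a - 1) (b := c) (by linarith) one_pos hc
    refine this.congr_fun (fun t ht => ?_) measurableSet_Ioi
    beta_reduce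
    rw [rpow_one, neg_mul]
  · filter_upwards [self_mem_ae_restrict measurableSet_Ioi] with t ht
    exact mul_nonneg (rpow_nonneg (le_of_lt ht) _) (exp_pos _).le

/-- **Theorem 1 (existence form).** The Zipf(α) distribution is a mixture of geometric
distributions on {1,2,3,...}: there is a Borel probability measure μ on (0,1) such that
x^(-α)/ζ(α) = ∫ p (1-p)^(x-1) dμ(p) for every positive integer x. -/
theorem zipf_is_mixture_of_geometric (α : ℝ) (hα : 1 < α) :
    ∃ μ : Measure ℝ, IsProbabilityMeasure μ ∧ μ (Ioo (0 : ℝ) 1)ᶜ = 0 ∧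
      ∀ x : ℕ, 0 < x →
        (x : ℝ) ^ (-α) / (∑' n : ℕ+, (n : ℝ) ^ (-α))
          = ∫ p, p * (1 - p) ^ (x - 1) ∂μ := by
  have hα0 : (0:ℝ) < α := by linarith
  set G := Real.Gamma α with hGdef
  set Z := ∑' n : ℕ+, (n:ℝ) ^ (-α) with hZdef
  have hGpos : 0 < G := Real.Gamma_pos_of_pos hα0
  have hsum' : Summable (fun n : ℕ => ((n:ℝ)+1) ^ (-α)) := by
    have h := (Real.summable_nat_rpow (p := -α)).mpr (by linarith)
    have := h.comp_injective Nat.succ_injective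
    refine this.congr fun n => ?_
    simp [Function.comp, Nat.succ_eq_add_one]
  have hZeq : Z = ∑' n : ℕ, ((n:ℝ)+1) ^ (-α) := by
    rw [hZdef, ← Equiv.tsum_eq (Equiv.pnatEquivNat.symm) (fun n : ℕ+ => (n:ℝ) ^ (-α))]
    refine tsum_congr fun n => ?_
    simp [Equiv.pnatEquivNat, Nat.succPNat]
  have hZpos : 0 < Z := by
    rw [hZeq]
    refine Summable.tsum_pos hsum' (fun n => rpow_nonneg (by positivity) _) 0 ?_
    norm_num
  have hGZ : (0:ℝ) < G * Z := mul_pos hGpos hZpos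
  -- density
  set g : ℝ → ENNReal := fun t => ENNReal.ofReal (t ^ (α-1) * exp (-t) / (1 - exp (-t))) with hgdef
  have hgm : Measurable g := by
    apply ENNReal.measurable_ofReal.comp
    fun_prop
  set ν₀ : Measure ℝ := (volume.restrict (Ioi 0)).withDensity g with hν₀
  -- total mass
  have hB : ∫⁻ t in Ioi (0:ℝ), g t = ENNReal.ofReal (G * Z) := by
    have h1 : ∀ t ∈ Ioi (0:ℝ), g t
        = ∑' n : ℕ, ENNReal.ofReal (t ^ (α-1) * exp (-(((n:ℝ)+1)*t))) := by
      intro t ht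
      have ht' : (0:ℝ) < t := ht
      set r := exp (-t) with hr
      have hr0 : 0 < r := exp_pos _
      have hr1 : r < 1 := exp_lt_one_iff.mpr (by linarith)
      have hterm : ∀ n : ℕ, t ^ (α-1) * exp (-(((n:ℝ)+1)*t)) = t ^ (α-1) * r * r ^ n := by
        intro n
        have : exp (-(((n:ℝ)+1)*t)) = r ^ (n+1) := by
          rw [hr, ← Real.exp_nat_mul]
          push_cast
          ring_nf
        rw [this, pow_succ]
        ring
      have hsumg : Summable (fun n : ℕ => t ^ (α-1) * r * r ^ n) :=
        (summable_geometric_of_lt_one hr0.le hr1).mul_left _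
      have htsum : ∑' n : ℕ, t ^ (α-1) * r * r ^ n = t ^ (α-1) * r / (1 - r) := by
        rw [tsum_mul_left, tsum_geometric_of_lt_one hr0.le hr1, div_eq_mul_inv]
      calc g t = ENNReal.ofReal (∑' n : ℕ, t ^ (α-1) * r * r ^ n) := by
            rw [htsum]
        _ = ∑' n : ℕ, ENNReal.ofReal (t ^ (α-1) * r * r ^ n) := by
            refine ENNReal.ofReal_tsum_of_nonneg (fun n => ?_) hsumg
            have : (0:ℝ) ≤ t ^ (α-1) := rpow_nonneg ht'.le _
            positivity
        _ = ∑' n : ℕ, ENNReal.ofReal (t ^ (α-1) * exp (-(((n:ℝ)+1)*t))) := by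
            refine tsum_congr fun n => ?_
            rw [hterm n]
    rw [setLIntegral_congr_fun measurableSet_Ioi h1,
      lintegral_tsum (fun n => by fun_prop)]
    have h2 : ∀ n : ℕ, ∫⁻ t in Ioi (0:ℝ),
        ENNReal.ofReal (t ^ (α-1) * exp (-(((n:ℝ)+1)*t)))
        = ENNReal.ofReal (((n:ℝ)+1) ^ (-α) * G) := by
      intro n
      rw [lintA hα0 (by positivity)]
      congr 1
      rw [one_div, ← Real.rpow_neg_one, ← Real.rpow_mul (by positivity), neg_one_mul]
    simp_rw [h2]
    rw [← ENNReal.ofReal_tsum_of_nonneg (fun n => by positivity) (hsum'.mul_right G),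
      tsum_mul_right, ← hZeq, mul_comm]
  set c : ENNReal := (ENNReal.ofReal (G * Z))⁻¹ with hc
  have hcne : ENNReal.ofReal (G*Z) ≠ 0 := by
    simp [ENNReal.ofReal_eq_zero, not_le, hGZ]
  set φ : ℝ → ℝ := fun t => 1 - exp (-t) with hφ
  have hφm : Measurable φ := by fun_prop
  refine ⟨Measure.map φ (c • ν₀), ?_, ?_, ?_⟩
  · constructor
    rw [Measure.map_apply hφm MeasurableSet.univ, preimage_univ, Measure.smul_apply,
      smul_eq_mul, hν₀, withDensity_apply _ MeasurableSet.univ, Measure.restrict_univ, hB, hc]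
    exact ENNReal.inv_mul_cancel hcne ENNReal.ofReal_ne_top
  · rw [Measure.map_apply hφm (measurableSet_Ioo.compl), Measure.smul_apply, smul_eq_mul]
    have hsub : φ ⁻¹' (Ioo (0:ℝ) 1)ᶜ ⊆ (Ioi (0:ℝ))ᶜ := by
      intro t ht hpos
      have hpos' : (0:ℝ) < t := hpos
      have h1 : exp (-t) < 1 := exp_lt_one_iff.mpr (by linarith)
      have h2 : 0 < exp (-t) := exp_pos _
      exact ht ⟨by simp only [hφ]; linarith, by simp only [hφ]; linarith⟩
    have hnull : ν₀ (Ioi (0:ℝ))ᶜ = 0 := by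
      rw [hν₀, withDensity_apply _ measurableSet_Ioi.compl,
        Measure.restrict_restrict measurableSet_Ioi.compl, compl_inter_self]
      simp
    rw [measure_mono_null hsub hnull, mul_zero]
  · intro x hx
    have hxR : (0:ℝ) < (x:ℝ) := by exact_mod_cast hx
    have hfc : Continuous fun p : ℝ => p * (1 - p) ^ (x-1) := by fun_prop
    rw [integral_map hφm.aemeasurable hfc.aestronglyMeasurable, integral_smul_measure]
    have hcomp : ∀ t : ℝ, φ t * (1 - φ t) ^ (x-1) = (1 - exp (-t)) * exp (-t) ^ (x-1) := by
      intro t; simp [hφ]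
    simp_rw [hcomp]
    have hmeas2 : Measurable fun t : ℝ => ENNReal.ofReal ((1 - exp (-t)) * exp (-t) ^ (x-1)) := by
      fun_prop
    have hnn : 0 ≤ᵐ[ν₀] fun t : ℝ => (1 - exp (-t)) * exp (-t) ^ (x-1) := by
      refine (withDensity_absolutelyContinuous (volume.restrict (Ioi 0)) g).ae_le ?_
      filter_upwards [self_mem_ae_restrict measurableSet_Ioi] with t ht
      have h1 : exp (-t) < 1 := exp_lt_one_iff.mpr (by simpa using ht)
      have h2 : 0 < exp (-t) := exp_pos _
      exact mul_nonneg (by linarith) (pow_nonneg h2.le _)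
    rw [integral_eq_lintegral_of_nonneg_ae hnn
      (Continuous.aestronglyMeasurable (by fun_prop))]
    rw [hν₀, lintegral_withDensity_eq_lintegral_mul _ hgm hmeas2]
    have hpt : ∀ t ∈ Ioi (0:ℝ),
        (g * fun t => ENNReal.ofReal ((1 - exp (-t)) * exp (-t) ^ (x-1))) t
          = ENNReal.ofReal (t ^ (α-1) * exp (-((x:ℝ)*t))) := by
      intro t ht
      have ht' : (0:ℝ) < t := ht
      have h1 : exp (-t) < 1 := exp_lt_one_iff.mpr (by linarith)
      have h2 : 0 < exp (-t) := exp_pos _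
      have hne : (1:ℝ) - exp (-t) ≠ 0 := by linarith
      simp only [Pi.mul_apply, hgdef]
      rw [← ENNReal.ofReal_mul (div_nonneg (mul_nonneg (rpow_nonneg ht'.le _) (exp_pos _).le) (by linarith))]
      congr 1
      have hexp : exp (-((x:ℝ)*t)) = exp (-t) ^ x := by
        rw [← Real.exp_nat_mul]; ring_nf
      have hxsucc : exp (-t) ^ x = exp (-t) * exp (-t) ^ (x-1) := by
        conv_lhs => rw [← Nat.succ_pred_eq_of_pos hx]
        rw [pow_succ, Nat.pred_eq_sub_one]
        ring
      rw [hexp, hxsucc]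
      field_simp
    rw [show (∫⁻ t in Ioi (0:ℝ), (g * fun t => ENNReal.ofReal ((1 - exp (-t)) * exp (-t) ^ (x-1))) t)
        = ∫⁻ t in Ioi (0:ℝ), ENNReal.ofReal (t ^ (α-1) * exp (-((x:ℝ)*t))) from
      setLIntegral_congr_fun measurableSet_Ioi hpt]
    rw [lintA hα0 hxR]
    rw [ENNReal.toReal_ofReal (by positivity)]
    have hpow : (1/(x:ℝ)) ^ α = (x:ℝ) ^ (-α) := by
      rw [one_div, ← Real.rpow_neg_one, ← Real.rpow_mul (by positivity)]
      norm_num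
    rw [hpow, hc, smul_eq_mul]
    rw [ENNReal.toReal_inv, ENNReal.toReal_ofReal hGZ.le]
    field_simp
    ring
end

section
/- Let α > 1 be real. There exists a Borel probability measure μ on (0, ∞) such that for every positive integer x one has x^{-α}/ζ(α) = ∫ e^{-λ}·λ^x / ((1 − e^{-λ})·x!) dμ(λ). (Theorem 2(a), existence form: the Zipf(α) distribution is a mixture of zero-truncated Poisson distributions.) -/
open MeasureTheory Real Set

namespace ZMZTP

lemma integrableOn_rpow_exp {q b : ℝ} (hq : -1 < q) (hb : 0 < b) :
    IntegrableOn (fun x : ℝ => x ^ q * Real.exp (-b * x)) (Ioi 0) := by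
  have := integrableOn_rpow_mul_exp_neg_mul_rpow (p := 1) hq one_pos hb
  simpa [Real.rpow_one] using this

lemma integral_rpow_exp {q b : ℝ} (hq : -1 < q) (hb : 0 < b) :
    ∫ x in Ioi (0:ℝ), x ^ q * Real.exp (-b * x) = Real.Gamma (q+1) / b ^ (q+1) := by
  have := integral_rpow_mul_exp_neg_mul_rpow (p := 1) one_pos hq hb
  simp only [Real.rpow_one, div_one, one_div, neg_div] at this
  rw [this, Real.rpow_neg hb.le]
  ring

lemma integrableOn_exp_neg {b : ℝ} (hb : 0 < b) :
    IntegrableOn (fun x : ℝ => Real.exp (-b * x)) (Ioi 0) := by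
  simpa [neg_mul] using exp_neg_integrableOn_Ioi 0 hb

lemma integral_exp_neg {b : ℝ} (hb : 0 < b) :
    ∫ x in Ioi (0:ℝ), Real.exp (-b * x) = 1 / b := by
  have h := integral_rpow_exp (q := 0) (by norm_num) hb
  simp only [Real.rpow_zero, one_mul, zero_add, Real.Gamma_one, Real.rpow_one] at h
  exact h

lemma meas_rpow_exp (q b : ℝ) : Measurable (fun s : ℝ => s ^ q * Real.exp (-b * s)) := by
  have h1 : Measurable fun s : ℝ => s ^ q := by measurability
  have h2 : Measurable fun s : ℝ => Real.exp (-b * s) :=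
    Real.measurable_exp.comp (measurable_id.const_mul (-b))
  exact h1.mul h2

lemma lint_gamma {q b : ℝ} (hq : -1 < q) (hb : 0 < b) :
    ∫⁻ s in Ioi (0:ℝ), ENNReal.ofReal (s ^ q * Real.exp (-b * s))
      = ENNReal.ofReal (Real.Gamma (q+1) / b ^ (q+1)) := by
  rw [← ofReal_integral_eq_lintegral_ofReal (integrableOn_rpow_exp hq hb)
    ((ae_restrict_iff' measurableSet_Ioi).mpr (Filter.Eventually.of_forall
      (fun s hs => mul_nonneg (Real.rpow_nonneg hs.le _) (Real.exp_pos _).le))),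
    integral_rpow_exp hq hb]

lemma summable_pnat {α : ℝ} (hα : 1 < α) : Summable (fun n : ℕ+ => (n:ℝ) ^ (-α)) := by
  have h : Summable (fun n : ℕ => (n:ℝ) ^ (-α)) := Real.summable_nat_rpow.mpr (by linarith)
  exact h.comp_injective (fun a b hab => PNat.coe_injective hab)

lemma zeta_pos {α : ℝ} (hα : 1 < α) : 0 < ∑' n : ℕ+, (n:ℝ) ^ (-α) := by
  refine Summable.tsum_pos (summable_pnat hα) (fun n => Real.rpow_nonneg (by positivity) _) 1 ?_
  simp

lemma pnat_geom {r : ℝ} (h1 : |r| < 1) : ∑' n : ℕ+, r ^ (n : ℕ) = r / (1 - r) := by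
  have := Equiv.pnatEquivNat.symm.tsum_eq (fun n : ℕ+ => r ^ (n : ℕ))
  rw [← this]
  have h2 : ∀ m : ℕ, ((Equiv.pnatEquivNat.symm m : ℕ+) : ℕ) = m + 1 := fun m => rfl
  simp_rw [h2, pow_succ, tsum_mul_right, tsum_geometric_of_abs_lt_one h1]
  rw [div_eq_mul_inv, mul_comm]

lemma pointwise_bose {α s : ℝ} (hs : 0 < s) :
    s ^ (α-1) / (Real.exp s - 1) = ∑' n : ℕ+, s ^ (α-1) * Real.exp (-(n:ℝ)*s) := by
  have hr0 : (0:ℝ) < Real.exp (-s) := Real.exp_pos _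
  have hr1 : Real.exp (-s) < 1 := Real.exp_lt_one_iff.mpr (by linarith)
  have habs : |Real.exp (-s)| < 1 := by rwa [abs_of_pos hr0]
  have hterm : ∀ n : ℕ+, Real.exp (-(n:ℝ)*s) = (Real.exp (-s)) ^ (n:ℕ) := by
    intro n
    rw [← Real.exp_nat_mul]
    ring_nf
  simp_rw [hterm]
  rw [tsum_mul_left, pnat_geom habs]
  have h1 : Real.exp s ≠ 0 := Real.exp_ne_zero s
  have h2 : Real.exp s - 1 ≠ 0 := by
    have : 1 < Real.exp s := Real.one_lt_exp_iff.mpr hs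
    linarith
  rw [Real.exp_neg]
  field_simp

lemma summable_term {α s : ℝ} (hs : 0 < s) :
    Summable (fun n : ℕ+ => s ^ (α-1) * Real.exp (-(n:ℝ)*s)) := by
  have hr1 : |Real.exp (-s)| < 1 := by
    rw [abs_of_pos (Real.exp_pos _)]; exact Real.exp_lt_one_iff.mpr (by linarith)
  have hg : Summable (fun n : ℕ => (Real.exp (-s)) ^ n) := summable_geometric_of_abs_lt_one hr1
  have : Summable (fun n : ℕ+ => (Real.exp (-s)) ^ (n:ℕ)) :=
    hg.comp_injective (fun a b hab => PNat.coe_injective hab)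
  have h2 := this.mul_left (s ^ (α-1))
  refine h2.congr (fun n => ?_)
  rw [← Real.exp_nat_mul]
  ring_nf

lemma lint_zeta {α : ℝ} (hα : 1 < α) :
    ∫⁻ s in Ioi (0:ℝ), ENNReal.ofReal (s ^ (α-1) / (Real.exp s - 1))
      = ENNReal.ofReal (Real.Gamma α * ∑' n : ℕ+, (n:ℝ) ^ (-α)) := by
  have hcong : ∀ s ∈ Ioi (0:ℝ), ENNReal.ofReal (s ^ (α-1) / (Real.exp s - 1))
      = ∑' n : ℕ+, ENNReal.ofReal (s ^ (α-1) * Real.exp (-(n:ℝ)*s)) := by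
    intro s hs
    rw [pointwise_bose hs, ENNReal.ofReal_tsum_of_nonneg
      (fun n => mul_nonneg (Real.rpow_nonneg (le_of_lt hs) _) (Real.exp_pos _).le)
      (summable_term hs)]
  rw [setLIntegral_congr_fun measurableSet_Ioi hcong]
  rw [lintegral_tsum (fun n : ℕ+ => ((meas_rpow_exp (α-1) (n:ℝ)).ennreal_ofReal).aemeasurable)]
  have hint : ∀ n : ℕ+, ∫⁻ s in Ioi (0:ℝ), ENNReal.ofReal (s ^ (α-1) * Real.exp (-(n:ℝ)*s))
      = ENNReal.ofReal (Real.Gamma α * (n:ℝ) ^ (-α)) := by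
    intro n
    have hn : (0:ℝ) < (n:ℝ) := by exact_mod_cast n.pos
    rw [lint_gamma (by linarith) hn]
    congr 1
    rw [sub_add_cancel, Real.rpow_neg hn.le]
    ring
  simp_rw [hint]
  rw [← ENNReal.ofReal_tsum_of_nonneg
    (fun n => mul_nonneg (Real.Gamma_nonneg_of_nonneg (by positivity)) (by positivity))
    ((summable_pnat hα).mul_left _), tsum_mul_left]

noncomputable def g (s l : ℝ) : ℝ :=
  Real.exp s * (Real.exp s - 1) * ((1 - Real.exp (-l)) * Real.exp (-(Real.exp s - 1) * l))

lemma meas_g2 : Measurable (fun p : ℝ × ℝ => ENNReal.ofReal (g p.1 p.2)) := by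
  apply Measurable.ennreal_ofReal
  unfold g
  fun_prop

lemma meas_g (s : ℝ) : Measurable (fun l => ENNReal.ofReal (g s l)) := by
  apply Measurable.ennreal_ofReal
  unfold g
  fun_prop

noncomputable def κ (s : ℝ) : Measure ℝ :=
  (volume.restrict (Ioi 0)).withDensity (fun l => ENNReal.ofReal (g s l))

lemma kappa_apply (s : ℝ) {A : Set ℝ} (hA : MeasurableSet A) :
    κ s A = ∫⁻ l in A, ENNReal.ofReal (g s l) ∂(volume.restrict (Ioi 0)) :=
  withDensity_apply _ hA

lemma measurable_kappa : Measurable κ := by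
  apply Measure.measurable_of_measurable_coe
  intro A hA
  simp_rw [fun s => kappa_apply s hA]
  exact Measurable.lintegral_prod_right meas_g2

lemma kappa_compl (s : ℝ) : κ s (Ioi 0)ᶜ = 0 := by
  rw [kappa_apply s measurableSet_Ioi.compl, Measure.restrict_restrict measurableSet_Ioi.compl]
  have : (Ioi (0:ℝ))ᶜ ∩ Ioi 0 = ∅ := by
    ext y; simp
  rw [this]
  simp

lemma g_eq (s l : ℝ) : g s l = (Real.exp s * (Real.exp s - 1)) * Real.exp (-(Real.exp s - 1) * l)
    - (Real.exp s * (Real.exp s - 1)) * Real.exp (-(Real.exp s - 1 + 1) * l) := by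
  unfold g
  rw [show -(Real.exp s - 1 + 1) * l = -(Real.exp s - 1) * l + -l by ring, Real.exp_add]
  ring

lemma g_integrableOn {s : ℝ} (hs : 0 < s) : IntegrableOn (fun l => g s l) (Ioi 0) := by
  have hθ : 0 < Real.exp s - 1 := by
    have := Real.one_lt_exp_iff.mpr hs; linarith
  simp_rw [g_eq]
  exact (((integrableOn_exp_neg hθ).const_mul _).sub
    (((integrableOn_exp_neg (by linarith)).const_mul _)))

lemma g_nonneg {s l : ℝ} (hs : 0 < s) (hl : 0 < l) : 0 ≤ g s l := by
  have h1 : 1 ≤ Real.exp s := (Real.one_lt_exp_iff.mpr hs).le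
  have h2 : Real.exp (-l) ≤ 1 := Real.exp_le_one_iff.mpr (by linarith)
  unfold g
  have h3 := Real.exp_pos s
  exact mul_nonneg (mul_nonneg h3.le (by linarith))
    (mul_nonneg (by linarith) (Real.exp_pos _).le)

lemma integral_g {s : ℝ} (hs : 0 < s) : ∫ l in Ioi (0:ℝ), g s l = 1 := by
  have hθ : 0 < Real.exp s - 1 := by
    have := Real.one_lt_exp_iff.mpr hs; linarith
  simp_rw [g_eq]
  rw [integral_sub ((integrableOn_exp_neg hθ).const_mul _)
    ((integrableOn_exp_neg (by linarith : (0:ℝ) < Real.exp s - 1 + 1)).const_mul _)]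
  rw [integral_const_mul, integral_const_mul, integral_exp_neg hθ,
    integral_exp_neg (by linarith : (0:ℝ) < Real.exp s - 1 + 1)]
  have h1 : Real.exp s - 1 ≠ 0 := ne_of_gt hθ
  have h3 : Real.exp s - 1 + 1 = Real.exp s := by ring
  rw [h3]
  field_simp
  ring

lemma kappa_univ {s : ℝ} (hs : 0 < s) : κ s univ = 1 := by
  rw [kappa_apply s MeasurableSet.univ, Measure.restrict_univ,
    ← ofReal_integral_eq_lintegral_ofReal (g_integrableOn hs)
      ((ae_restrict_iff' measurableSet_Ioi).mpr (Filter.Eventually.of_forall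
        (fun l hl => g_nonneg hs hl))),
    integral_g hs, ENNReal.ofReal_one]

noncomputable def zc (α : ℝ) : ℝ := Real.Gamma α * ∑' n : ℕ+, (n:ℝ) ^ (-α)

lemma zc_pos {α : ℝ} (hα : 1 < α) : 0 < zc α :=
  mul_pos (Real.Gamma_pos_of_pos (by linarith)) (zeta_pos hα)

noncomputable def w (α s : ℝ) : ℝ := s ^ (α-1) / (zc α * (Real.exp s - 1))

lemma meas_w (α : ℝ) : Measurable (fun s => ENNReal.ofReal (w α s)) := by
  apply Measurable.ennreal_ofReal
  unfold w
  fun_prop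

lemma w_nonneg {α : ℝ} (hα : 1 < α) {s : ℝ} (hs : 0 < s) : 0 ≤ w α s := by
  have hθ : 0 < Real.exp s - 1 := by
    have := Real.one_lt_exp_iff.mpr hs; linarith
  exact div_nonneg (Real.rpow_nonneg hs.le _) (mul_nonneg (zc_pos hα).le hθ.le)

noncomputable def ν (α : ℝ) : Measure ℝ :=
  (volume.restrict (Ioi 0)).withDensity (fun s => ENNReal.ofReal (w α s))

lemma nu_ae (α : ℝ) : ∀ᵐ s ∂(ν α), s ∈ Ioi (0:ℝ) := by
  rw [ae_iff]
  have h0 : {s : ℝ | ¬ s ∈ Ioi (0:ℝ)} = (Ioi (0:ℝ))ᶜ := rfl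
  rw [h0, ν, withDensity_apply _ measurableSet_Ioi.compl,
    Measure.restrict_restrict measurableSet_Ioi.compl]
  have h : (Ioi (0:ℝ))ᶜ ∩ Ioi 0 = ∅ := by ext y; simp
  rw [h]; simp

lemma w_eq (α s : ℝ) : w α s = (zc α)⁻¹ * (s ^ (α-1) / (Real.exp s - 1)) := by
  unfold w
  rw [div_eq_mul_inv, div_eq_mul_inv, mul_inv]
  ring

lemma nu_univ {α : ℝ} (hα : 1 < α) : ν α univ = 1 := by
  rw [ν, withDensity_apply _ MeasurableSet.univ, Measure.restrict_univ]
  simp_rw [w_eq, ENNReal.ofReal_mul (inv_nonneg.mpr (zc_pos hα).le)]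
  rw [lintegral_const_mul _ (Measurable.ennreal_ofReal (by fun_prop)), lint_zeta hα,
    ← ENNReal.ofReal_mul (inv_nonneg.mpr (zc_pos hα).le)]
  rw [show Real.Gamma α * ∑' n : ℕ+, (n:ℝ) ^ (-α) = zc α from rfl,
    inv_mul_cancel₀ (ne_of_gt (zc_pos hα)), ENNReal.ofReal_one]

noncomputable def μm (α : ℝ) : Measure ℝ := (ν α).bind κ

lemma isProb {α : ℝ} (hα : 1 < α) : IsProbabilityMeasure (μm α) := by
  constructor
  rw [μm, Measure.bind_apply MeasurableSet.univ measurable_kappa.aemeasurable]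
  rw [lintegral_congr_ae ((nu_ae α).mono (fun s hs => kappa_univ hs))]
  rw [lintegral_one, nu_univ hα]

lemma mu_compl {α : ℝ} : μm α (Ioi 0)ᶜ = 0 := by
  rw [μm, Measure.bind_apply measurableSet_Ioi.compl measurable_kappa.aemeasurable]
  simp only [kappa_compl, lintegral_zero]

noncomputable def F (x : ℕ) (l : ℝ) : ℝ :=
  Real.exp (-l) * l ^ x / ((1 - Real.exp (-l)) * (Nat.factorial x))

lemma meas_F (x : ℕ) : Measurable (F x) := by
  unfold F
  fun_prop

lemma inner_int {s : ℝ} (hs : 0 < s) (x : ℕ) :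
    ∫⁻ l, ENNReal.ofReal (F x l) ∂(κ s)
      = ENNReal.ofReal ((Real.exp s - 1) * Real.exp (-(x:ℝ) * s)) := by
  have hθ : 0 < Real.exp s - 1 := by
    have := Real.one_lt_exp_iff.mpr hs; linarith
  have hfac : (0:ℝ) < (Nat.factorial x : ℝ) := by exact_mod_cast x.factorial_pos
  rw [κ, lintegral_withDensity_eq_lintegral_mul _ (meas_g s) ((meas_F x).ennreal_ofReal)]
  have hcong : ∀ l ∈ Ioi (0:ℝ),
      ((fun l => ENNReal.ofReal (g s l)) * fun l => ENNReal.ofReal (F x l)) l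
      = ENNReal.ofReal ((Real.exp s * (Real.exp s - 1) / (Nat.factorial x))
          * (l ^ ((x:ℕ):ℝ) * Real.exp (-(Real.exp s) * l))) := by
    intro l hl
    have hl' : (0:ℝ) < l := hl
    simp only [Pi.mul_apply]
    rw [← ENNReal.ofReal_mul (g_nonneg hs hl')]
    congr 1
    have h2 : Real.exp (-l) < 1 := Real.exp_lt_one_iff.mpr (by linarith)
    have h0 : (1:ℝ) - Real.exp (-l) ≠ 0 := ne_of_gt (by linarith)
    have he : Real.exp (-(Real.exp s) * l)
        = Real.exp (-(Real.exp s - 1) * l) * Real.exp (-l) := by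
      rw [← Real.exp_add]; ring_nf
    rw [Real.rpow_natCast, he]
    unfold g F
    field_simp
  rw [setLIntegral_congr_fun measurableSet_Ioi hcong]
  have hC : 0 ≤ Real.exp s * (Real.exp s - 1) / (Nat.factorial x) := by positivity
  simp_rw [ENNReal.ofReal_mul hC]
  rw [lintegral_const_mul _ ((meas_rpow_exp _ _).ennreal_ofReal)]
  have hxq : (-1:ℝ) < ((x:ℕ):ℝ) := by
    have : (0:ℝ) ≤ (x:ℝ) := Nat.cast_nonneg x
    linarith
  rw [lint_gamma hxq (Real.exp_pos s), ← ENNReal.ofReal_mul hC]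
  congr 1
  have hfacΓ : Real.Gamma ((x:ℝ)+1) = (Nat.factorial x : ℝ) := by
    exact_mod_cast Real.Gamma_nat_eq_factorial x
  have hre : (Real.exp s) ^ ((x:ℝ)+1) = Real.exp (s * ((x:ℝ)+1)) := by
    rw [Real.rpow_def_of_pos (Real.exp_pos s), Real.log_exp]
  rw [hfacΓ, hre]
  have hsplit : Real.exp (-(x:ℝ)*s) = Real.exp s / Real.exp (s*((x:ℝ)+1)) := by
    rw [← Real.exp_sub]; congr 1; ring
  rw [hsplit]
  have hene : Real.exp (s*((x:ℝ)+1)) ≠ 0 := Real.exp_ne_zero _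
  field_simp

lemma main_lint {α : ℝ} (hα : 1 < α) {x : ℕ} (hx : 0 < x) :
    ∫⁻ l, ENNReal.ofReal (F x l) ∂(μm α)
      = ENNReal.ofReal ((x:ℝ) ^ (-α) / ∑' n : ℕ+, (n:ℝ) ^ (-α)) := by
  have hζ := zeta_pos hα
  have hΓ := Real.Gamma_pos_of_pos (show (0:ℝ) < α by linarith)
  have hx' : (0:ℝ) < (x:ℝ) := by exact_mod_cast hx
  have hmeas : Measurable (fun s => ∫⁻ l, ENNReal.ofReal (F x l) ∂(κ s)) :=
    (Measure.measurable_lintegral ((meas_F x).ennreal_ofReal)).comp measurable_kappa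
  rw [μm, Measure.lintegral_bind measurable_kappa.aemeasurable ((meas_F x).ennreal_ofReal).aemeasurable]
  rw [ν, lintegral_withDensity_eq_lintegral_mul _ (meas_w α) hmeas]
  have hcong : ∀ s ∈ Ioi (0:ℝ),
      ((fun s => ENNReal.ofReal (w α s)) * fun s => ∫⁻ l, ENNReal.ofReal (F x l) ∂(κ s)) s
        = ENNReal.ofReal ((zc α)⁻¹)
          * ENNReal.ofReal (s ^ (α-1) * Real.exp (-(x:ℝ) * s)) := by
    intro s hs
    have hs' : (0:ℝ) < s := hs
    have hθ : 0 < Real.exp s - 1 := by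
      have := Real.one_lt_exp_iff.mpr hs'; linarith
    simp only [Pi.mul_apply]
    rw [inner_int hs' x, ← ENNReal.ofReal_mul (w_nonneg hα hs'),
      ← ENNReal.ofReal_mul (inv_nonneg.mpr (zc_pos hα).le)]
    congr 1
    unfold w
    field_simp [ne_of_gt (zc_pos hα), ne_of_gt hθ]
  rw [setLIntegral_congr_fun measurableSet_Ioi hcong]
  rw [lintegral_const_mul _ ((meas_rpow_exp _ _).ennreal_ofReal)]
  rw [lint_gamma (by linarith) hx', sub_add_cancel,
    ← ENNReal.ofReal_mul (inv_nonneg.mpr (zc_pos hα).le)]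
  congr 1
  rw [Real.rpow_neg (Nat.cast_nonneg x)]
  unfold zc
  have hxα : (0:ℝ) < (x:ℝ) ^ α := Real.rpow_pos_of_pos hx' α
  field_simp

end ZMZTP

/-- **Theorem 2(a) (existence form).** The Zipf(α) distribution is a mixture of
zero-truncated Poisson distributions: there is a Borel probability measure μ on (0,∞)
such that x^(-α)/ζ(α) = ∫ e^(-λ) λ^x / ((1 - e^(-λ)) x!) dμ(λ) for every positive
integer x. -/
theorem zipf_is_mztp (α : ℝ) (hα : 1 < α) :
    ∃ μ : Measure ℝ, IsProbabilityMeasure μ ∧ μ (Ioi (0 : ℝ))ᶜ = 0 ∧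
      ∀ x : ℕ, 0 < x →
        (x : ℝ) ^ (-α) / (∑' n : ℕ+, (n : ℝ) ^ (-α))
          = ∫ l, Real.exp (-l) * l ^ (x : ℕ) / ((1 - Real.exp (-l)) * (Nat.factorial x)) ∂μ := by
  refine ⟨ZMZTP.μm α, ZMZTP.isProb hα, ZMZTP.mu_compl, fun x hx => ?_⟩
  have hae : ∀ᵐ l ∂(ZMZTP.μm α), l ∈ Ioi (0:ℝ) := by
    rw [ae_iff]
    have h0 : {l : ℝ | ¬ l ∈ Ioi (0:ℝ)} = (Ioi (0:ℝ))ᶜ := rfl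
    rw [h0, ZMZTP.mu_compl]
  have hnn : 0 ≤ᵐ[ZMZTP.μm α] ZMZTP.F x := by
    refine hae.mono (fun l hl => ?_)
    have hl' : (0:ℝ) < l := hl
    have h2 : Real.exp (-l) ≤ 1 := Real.exp_le_one_iff.mpr (by linarith)
    unfold ZMZTP.F
    exact div_nonneg (mul_nonneg (Real.exp_pos _).le (pow_nonneg hl'.le x))
      (mul_nonneg (by linarith) (Nat.cast_nonneg _))
  show (x:ℝ) ^ (-α) / (∑' n : ℕ+, (n:ℝ) ^ (-α)) = ∫ l, ZMZTP.F x l ∂(ZMZTP.μm α)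
  rw [integral_eq_lintegral_of_nonneg_ae hnn ((ZMZTP.meas_F x).aestronglyMeasurable),
    ZMZTP.main_lint hα hx, ENNReal.toReal_ofReal
      (div_nonneg (Real.rpow_nonneg (Nat.cast_nonneg x) _) (ZMZTP.zeta_pos hα).le)]
end
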